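/- arXiv:1609.03225 — 10 statements merged into one kernel-verified Lean document; each statement's English description precedes it below -/
import Mathlib

section
/- Let S be a commutative cancellative semigroup (written additively) with at least three elements, let G = S - S be its group of differences, let u, v be (possibly infinite) index sets, and let A be a u × v matrix with integer entries and finitely many nonzero entries per row. Define the u × (2v) matrix C whose columns come in pairs: for each column index j of A, C has a column equal to the j-th column of A and a column equal to its negation. Then {A x : x ∈ G^v} = {C y : y ∈ (S \ {0})^(2v)}. -/
open scoped BigOperators

/-- Matrix–vector product of an integer matrix with a vector in an abelian group,
computed via `finsum` (well defined since each row has finite support). -/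
noncomputable def intMulVec {u v G : Type} [AddCommGroup G]
    (A : u → v → ℤ) (x : v → G) : u → G :=
  fun i => ∑ᶠ j, A i j • x j

lemma finsum_bool_pair {v G : Type} [AddCommGroup G] (f : v × Bool → G)
    (hf : (Function.support f).Finite) :
    ∑ᶠ p, f p = ∑ᶠ j, (f (j, false) + f (j, true)) := by
  classical
  set T : Finset v := (hf.image Prod.fst).toFinset with hT
  have hsub : Function.support f ⊆ ↑(T ×ˢ (Finset.univ : Finset Bool)) := by
    intro p hp
    simp only [Finset.coe_product, Set.mem_prod, Finset.mem_coe, hT, Set.Finite.mem_toFinset]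
    exact ⟨Set.mem_image_of_mem _ hp, by simp⟩
  have hsub2 : Function.support (fun j => f (j, false) + f (j, true)) ⊆ ↑T := by
    intro j hj
    by_contra hjT
    have h1 : f (j, false) = 0 := by
      by_contra h
      exact hjT (by simpa [hT] using Set.mem_image_of_mem Prod.fst (Function.mem_support.2 h))
    have h2 : f (j, true) = 0 := by
      by_contra h
      exact hjT (by simpa [hT] using Set.mem_image_of_mem Prod.fst (Function.mem_support.2 h))
    exact hj (by simp [Function.mem_support] at hj ⊢; simp [h1, h2])
  rw [finsum_eq_sum_of_support_subset f hsub,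
    finsum_eq_sum_of_support_subset _ hsub2, Finset.sum_product]
  refine Finset.sum_congr rfl fun j _ => ?_
  simp [Finset.sum_eq_add_of_mem (a := false) (b := true)]

/-- if `S` is a commutative cancellative semigroup with at least three
elements (modelled as an additive subsemigroup of its group of differences `G`,
so `G = S - S`), `A` is a `u × v` integer matrix with finitely many nonzero entries
per row, and `C` is the `u × (2v)` matrix whose columns are the columns of `A`
paired with their negations, then `{A x : x ∈ G^v} = {C y : y ∈ (S \ {0})^(2v)}`. -/
theorem stmt0 {G : Type} [AddCommGroup G] (S : AddSubsemigroup G)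
    (hSG : ∀ g : G, ∃ a ∈ S, ∃ b ∈ S, g = a - b)
    (hcard : ∃ a b c : G, a ∈ S ∧ b ∈ S ∧ c ∈ S ∧ a ≠ b ∧ a ≠ c ∧ b ≠ c)
    {u v : Type} (A : u → v → ℤ) (hA : ∀ i, (Function.support (A i)).Finite)
    (C : u → v × Bool → ℤ)
    (hC : ∀ i j, C i (j, false) = A i j ∧ C i (j, true) = -(A i j)) :
    {w : u → G | ∃ x : v → G, w = intMulVec A x} =
      {w : u → G | ∃ y : v × Bool → G,
        (∀ p, y p ∈ S ∧ y p ≠ 0) ∧ w = intMulVec C y} := by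
  classical
  -- Key computation: C y = A (y ∘ false - y ∘ true)
  have key : ∀ (y : v × Bool → G),
      intMulVec C y = intMulVec A (fun j => y (j, false) - y (j, true)) := by
    intro y
    funext i
    unfold intMulVec
    have hsupp : (Function.support fun p : v × Bool => C i p • y p).Finite := by
      apply ((hA i).image (fun j => (j, false))).union
        (((hA i).image (fun j => (j, true)))) |>.subset
      rintro ⟨j, b⟩ hp
      have hAij : A i j ≠ 0 := by
        intro h
        apply Function.mem_support.1 hp
        cases b
        · rw [(hC i j).1, h, zero_smul]
        · rw [(hC i j).2, h, neg_zero, zero_smul]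
      cases b
      · exact Or.inl ⟨j, hAij, rfl⟩
      · exact Or.inr ⟨j, hAij, rfl⟩
    rw [finsum_bool_pair _ hsupp]
    refine finsum_congr fun j => ?_
    rw [(hC i j).1, (hC i j).2, smul_sub, neg_smul]
    abel
  ext w
  simp only [Set.mem_setOf_eq]
  constructor
  · rintro ⟨x, rfl⟩
    -- find for each j elements a j, b j in S \ {0} with x j = a j - b j
    obtain ⟨s, t, r, hs, ht, hr, hst, hsr, htr⟩ := hcard
    have hex : ∀ g : G, ∃ a b : G, a ∈ S ∧ a ≠ 0 ∧ b ∈ S ∧ b ≠ 0 ∧ g = a - b := by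
      intro g
      obtain ⟨a, ha, b, hb, hab⟩ := hSG g
      -- among s,t,r at least one w with a+w ≠ 0 and b+w ≠ 0
      have : ∃ c : G, c ∈ S ∧ a + c ≠ 0 ∧ b + c ≠ 0 := by
        by_contra h
        push_neg at h
        have h1 := h s hs
        have h2 := h t ht
        have h3 := h r hr
        -- each of s,t,r makes a+· = 0 or b+· = 0; by pigeonhole two share, contradicting injectivity
        clear h1 h2 h3
        rcases Classical.em (a + s = 0) with hx1 | hx1 <;>
        rcases Classical.em (a + t = 0) with hx2 | hx2 <;>
        rcases Classical.em (a + r = 0) with hx3 | hx3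
        · exact hst (add_left_cancel (hx1.trans hx2.symm))
        · exact hst (add_left_cancel (hx1.trans hx2.symm))
        · exact hsr (add_left_cancel (hx1.trans hx3.symm))
        · exact htr (add_left_cancel ((h t ht hx2).trans (h r hr hx3).symm))
        · exact htr (add_left_cancel (hx2.trans hx3.symm))
        · exact hsr (add_left_cancel ((h s hs hx1).trans (h r hr hx3).symm))
        · exact hst (add_left_cancel ((h s hs hx1).trans (h t ht hx2).symm))
        · exact hst (add_left_cancel ((h s hs hx1).trans (h t ht hx2).symm))
      obtain ⟨c, hc, hac, hbc⟩ := this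
      exact ⟨a + c, b + c, S.add_mem ha hc, hac, S.add_mem hb hc, hbc, by
        rw [hab]; abel⟩
    choose a b haS ha0 hbS hb0 hab using hex
    refine ⟨fun p => if p.2 then b (x p.1) else a (x p.1), fun p => ?_, ?_⟩
    · cases hp2 : p.2 <;> simp [hp2, haS, ha0, hbS, hb0]
    · rw [key]
      refine congrArg _ ?_
      funext j
      simpa using hab (x j)
  · rintro ⟨y, -, rfl⟩
    exact ⟨_, key y⟩
end

section
/- Let S be a commutative cancellative semigroup with at least three elements, G = S - S, and A a u × v integer matrix (finitely many nonzero entries per row). Then A is weakly image partition regular over S if and only if the doubled matrix C (whose columns are the columns of A together with their negations) is image partition regular over S. -/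
open scoped BigOperators

lemma key_decomp {G : Type} [AddCommGroup G] (S : AddSubsemigroup G)
    (hSG : ∀ g : G, ∃ a ∈ S, ∃ b ∈ S, g = a - b)
    (hcard : ∃ a b c : G, a ∈ S ∧ b ∈ S ∧ c ∈ S ∧ a ≠ b ∧ a ≠ c ∧ b ≠ c)
    (g : G) : ∃ a ∈ S, ∃ b ∈ S, a ≠ 0 ∧ b ≠ 0 ∧ g = a - b := by
  obtain ⟨a, ha, b, hb, hg⟩ := hSG g
  obtain ⟨p, q, r, hp, hq, hr, hpq, hpr, hqr⟩ := hcard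
  have h : ∃ s, s ∈ S ∧ s ≠ -a ∧ s ≠ -b := by
    by_cases hpa : p = -a
    · have hqa : q ≠ -a := fun h => hpq (hpa.trans h.symm)
      have hra : r ≠ -a := fun h => hpr (hpa.trans h.symm)
      by_cases hqb : q = -b
      · have hrb : r ≠ -b := fun h => hqr (hqb.trans h.symm)
        exact ⟨r, hr, hra, hrb⟩
      · exact ⟨q, hq, hqa, hqb⟩
    · by_cases hpb : p = -b
      · have hqb : q ≠ -b := fun h => hpq (hpb.trans h.symm)
        have hrb : r ≠ -b := fun h => hpr (hpb.trans h.symm)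
        by_cases hqa : q = -a
        · have hra : r ≠ -a := fun h => hqr (hqa.trans h.symm)
          exact ⟨r, hr, hra, hrb⟩
        · exact ⟨q, hq, hqa, hqb⟩
      · exact ⟨p, hp, hpa, hpb⟩
  obtain ⟨s, hs, hsa, hsb⟩ := h
  refine ⟨a + s, S.add_mem ha hs, b + s, S.add_mem hb hs, ?_, ?_, ?_⟩
  · exact fun h => hsa (eq_neg_of_add_eq_zero_right h)
  · exact fun h => hsb (eq_neg_of_add_eq_zero_right h)
  · rw [hg]; abel

lemma mulVec_pair {u v G : Type} [AddCommGroup G] (A : u → v → ℤ)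
    (hA : ∀ i, (Function.support (A i)).Finite)
    (C : u → v × Bool → ℤ)
    (hC : ∀ i j, C i (j, false) = A i j ∧ C i (j, true) = -(A i j))
    (y : v × Bool → G) (i : u) :
    intMulVec C y i = intMulVec A (fun j => y (j, false) - y (j, true)) i := by
  classical
  have hT := hA i
  set T : Finset v := hT.toFinset with hTdef
  have h1 : Function.support (fun p : v × Bool => C i p • y p) ⊆
      ↑(T ×ˢ (Finset.univ : Finset Bool)) := by
    rintro ⟨j, b⟩ hjb
    have hCij : C i (j, b) ≠ 0 := by
      intro h; apply hjb; simp [h]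
    have hAij : A i j ≠ 0 := by
      intro h
      cases b
      · exact hCij (by rw [(hC i j).1, h])
      · exact hCij (by rw [(hC i j).2, h, neg_zero])
    simp [T, Set.Finite.mem_toFinset, Function.mem_support, hAij]
  have h2 : Function.support (fun j : v => A i j • (y (j, false) - y (j, true))) ⊆ ↑T := by
    intro j hj
    have hAij : A i j ≠ 0 := by
      intro h; apply hj; simp [h]
    simp [T, Set.Finite.mem_toFinset, Function.mem_support, hAij]
  unfold intMulVec
  rw [finsum_eq_sum_of_support_subset _ h1, finsum_eq_sum_of_support_subset _ h2,
    Finset.sum_product]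
  refine Finset.sum_congr rfl fun j _ => ?_
  rw [Fintype.sum_bool, (hC i j).1, (hC i j).2, smul_sub, neg_smul]
  abel

/-- with `S` a commutative cancellative semigroup with at least three
elements (an additive subsemigroup of its group of differences `G = S - S`),
`A` a `u × v` integer matrix with finitely many nonzero entries per row, and `C`
the `u × (2v)` matrix whose columns are the columns of `A` together with their
negations: `A` is weakly image partition regular over `S` iff `C` is image
partition regular over `S`. -/
theorem stmt2 {G : Type} [AddCommGroup G] (S : AddSubsemigroup G)
    (hSG : ∀ g : G, ∃ a ∈ S, ∃ b ∈ S, g = a - b)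
    (hcard : ∃ a b c : G, a ∈ S ∧ b ∈ S ∧ c ∈ S ∧ a ≠ b ∧ a ≠ c ∧ b ≠ c)
    {u v : Type} (A : u → v → ℤ) (hA : ∀ i, (Function.support (A i)).Finite)
    (C : u → v × Bool → ℤ)
    (hC : ∀ i j, C i (j, false) = A i j ∧ C i (j, true) = -(A i j)) :
    (∀ (k : ℕ) (φ : G → Fin k), ∃ x : v → G,
        (∀ i, intMulVec A x i ∈ S ∧ intMulVec A x i ≠ 0) ∧
        (∀ i i', φ (intMulVec A x i) = φ (intMulVec A x i'))) ↔
    (∀ (k : ℕ) (φ : G → Fin k), ∃ y : v × Bool → G,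
        (∀ p, y p ∈ S ∧ y p ≠ 0) ∧
        (∀ i, intMulVec C y i ∈ S ∧ intMulVec C y i ≠ 0) ∧
        (∀ i i', φ (intMulVec C y i) = φ (intMulVec C y i'))) := by
  constructor
  · intro hW k φ
    obtain ⟨x, hx1, hx2⟩ := hW k φ
    choose a haS b hbS ha0 hb0 hab using fun j => key_decomp S hSG hcard (x j)
    refine ⟨fun p => if p.2 then b p.1 else a p.1, ?_, ?_, ?_⟩
    · rintro ⟨j, b'⟩
      cases b'
      · exact ⟨haS j, ha0 j⟩
      · exact ⟨hbS j, hb0 j⟩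
    all_goals
      have hy : ∀ i, intMulVec C (fun p => if p.2 then b p.1 else a p.1) i
          = intMulVec A x i := by
        intro i
        rw [mulVec_pair A hA C hC]
        congr 1
        funext j
        simp only []
        exact (hab j).symm
    · intro i; rw [hy i]; exact hx1 i
    · intro i i'; rw [hy i, hy i']; exact hx2 i i'
  · intro hI k φ
    obtain ⟨y, _, hy1, hy2⟩ := hI k φ
    refine ⟨fun j => y (j, false) - y (j, true), ?_, ?_⟩
    · intro i; rw [← mulVec_pair A hA C hC]; exact hy1 i
    · intro i i'; rw [← mulVec_pair A hA C hC, ← mulVec_pair A hA C hC]; exact hy2 i i'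
end

section
/- Let F be a field, let u, v be (possibly countably infinite) index sets, and let B be a u × v matrix over F with finitely many nonzero entries per row. Then there exists a v × v matrix C over F with finitely many nonzero entries per row such that: (1) for every x ∈ F^v, B x = 0 if and only if C x = x; (2) B C = O; (3) the kernel of B equals the range of C (as maps on F^v); and (4) C² = C. -/
/-! Regard `v →₀ F` as the space of finitely supported row vectors and `x : v → F` as the
functional `w ↦ ∑ j, w j * x j` on it. A row-finite `v × v` matrix is then the transpose of an
endomorphism `ρ` of `v →₀ F` (its `j`-th row is `ρ (single j 1)`), and it acts on `x` by
precomposing this functional with `ρ`. Since the row space `W` of `B` has a complement, there is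
an idempotent `ρ` with kernel `W`; let `C` be its matrix. Then `B C = O` because `ρ` kills the
rows of `B`, `C² = C` because `ρ² = ρ`, and `C x = x` iff `x ∘ ρ = x` iff `x` vanishes on
`ker ρ = W` iff `B x = 0`. Range and fixed points of `C` agree since `C` is idempotent. -/

open scoped BigOperators

/-- Matrix–vector product over a field, via `finsum`. -/
noncomputable def fMulVec {u v F : Type} [Field F] (A : u → v → F) (x : v → F) : u → F :=
  fun i => ∑ᶠ j, A i j * x j

open Finsupp

theorem Submodule.exists_isIdempotentElem_ker_eq {K V : Type*} [DivisionRing K]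
    [AddCommGroup V] [Module K V] (W : Submodule K V) :
    ∃ ρ : V →ₗ[K] V, IsIdempotentElem ρ ∧ LinearMap.ker ρ = W := by
  obtain ⟨W', hW⟩ := W.exists_isCompl
  refine ⟨W'.projection W hW.symm, W'.isIdempotentElem_projection hW.symm, ?_⟩
  ext x
  exact Submodule.projection_apply_eq_zero_iff hW.symm

section

variable {R v : Type*} [Semiring R]

theorem finsum_mul_eq_linearCombination (w : v →₀ R) (x : v → R) :
    ∑ᶠ j, w j * x j = linearCombination R x w := by
  rw [linearCombination_apply, Finsupp.sum]
  exact finsum_eq_sum_of_support_subset _ fun j hj => by simpa using left_ne_zero_of_mul hj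

noncomputable def rowMatrix (f : (v →₀ R) →ₗ[R] (v →₀ R)) (j k : v) : R := f (single j 1) k

theorem finsum_mul_rowMatrix (f : (v →₀ R) →ₗ[R] (v →₀ R)) (w : v →₀ R) (k : v) :
    ∑ᶠ j, w j * rowMatrix f j k = f w k := by
  rw [finsum_mul_eq_linearCombination]
  show linearCombination R (fun j => rowMatrix f j k) w = (lapply k ∘ₗ f) w
  congr 1
  ext j
  simp [rowMatrix]

theorem finsum_rowMatrix_mul_rowMatrix (f g : (v →₀ R) →ₗ[R] (v →₀ R)) (i k : v) :
    ∑ᶠ j, rowMatrix f i j * rowMatrix g j k = rowMatrix (g ∘ₗ f) i k :=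
  finsum_mul_rowMatrix g _ k

end

section

variable {F u v : Type} [Field F]

theorem fMulVec_eq_linearCombination {A : u → v → F}
    (hA : ∀ i, (Function.support (A i)).Finite) (x : v → F) (i : u) :
    fMulVec A x i = linearCombination F x (ofSupportFinite (A i) (hA i)) :=
  finsum_mul_eq_linearCombination (ofSupportFinite (A i) (hA i)) x

theorem fMulVec_rowMatrix (f : (v →₀ F) →ₗ[F] (v →₀ F)) (x : v → F) (j : v) :
    fMulVec (rowMatrix f) x j = linearCombination F x (f (single j 1)) :=
  finsum_mul_eq_linearCombination _ x

theorem linearCombination_fMulVec_rowMatrix (f : (v →₀ F) →ₗ[F] (v →₀ F)) (x : v → F) :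
    linearCombination F (fMulVec (rowMatrix f) x) = linearCombination F x ∘ₗ f := by
  ext j
  simp [fMulVec_rowMatrix]

theorem fMulVec_rowMatrix_eq_self_iff (f : (v →₀ F) →ₗ[F] (v →₀ F)) (x : v → F) :
    (∀ j, fMulVec (rowMatrix f) x j = x j) ↔
      linearCombination F x ∘ₗ f = linearCombination F x := by
  rw [← linearCombination_fMulVec_rowMatrix]
  refine ⟨fun h => congrArg _ (funext h), fun h j => ?_⟩
  simpa using LinearMap.congr_fun h (single j 1)

theorem fMulVec_eq_zero_iff_span_le_ker {A : u → v → F}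
    (hA : ∀ i, (Function.support (A i)).Finite) (x : v → F) :
    (∀ i, fMulVec A x i = 0) ↔
      Submodule.span F (Set.range fun i => ofSupportFinite (A i) (hA i)) ≤
        LinearMap.ker (linearCombination F x) := by
  simp [Submodule.span_le, Set.range_subset_iff, fMulVec_eq_linearCombination hA]

theorem setOf_fMulVec_rowMatrix_eq_self {ρ : (v →₀ F) →ₗ[F] (v →₀ F)} (hρ : IsIdempotentElem ρ) :
    {x : v → F | ∀ j, fMulVec (rowMatrix ρ) x j = x j} =
      {w : v → F | ∃ y : v → F, w = fMulVec (rowMatrix ρ) y} := by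
  ext x
  refine ⟨fun hx => ⟨x, (funext hx).symm⟩, ?_⟩
  rintro ⟨y, rfl⟩
  rw [Set.mem_ofPred_eq, fMulVec_rowMatrix_eq_self_iff, linearCombination_fMulVec_rowMatrix,
    LinearMap.comp_assoc, ← Module.End.mul_eq_comp, hρ.eq]

end

theorem stmt3_general {F : Type} [Field F] {u v : Type}
    (B : u → v → F) (hB : ∀ i, (Function.support (B i)).Finite) :
    ∃ C : v → v → F,
      (∀ i, (Function.support (C i)).Finite) ∧
      (∀ x : v → F, (∀ i, fMulVec B x i = 0) ↔ (∀ i, fMulVec C x i = x i)) ∧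
      (∀ i k, (∑ᶠ j, B i j * C j k) = 0) ∧
      ({x : v → F | ∀ i, fMulVec B x i = 0} =
        {w : v → F | ∃ y : v → F, w = fMulVec C y}) ∧
      (∀ i k, (∑ᶠ j, C i j * C j k) = C i k) := by
  set b : u → v →₀ F := fun i => ofSupportFinite (B i) (hB i)
  obtain ⟨ρ, hρ, hker⟩ := (Submodule.span F (Set.range b)).exists_isIdempotentElem_ker_eq
  have hfix (x : v → F) : (∀ i, fMulVec B x i = 0) ↔ ∀ j, fMulVec (rowMatrix ρ) x j = x j := by
    rw [fMulVec_eq_zero_iff_span_le_ker hB, ← hker, fMulVec_rowMatrix_eq_self_iff,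
      LinearMap.IsIdempotentElem.comp_eq_left_iff hρ]
  refine ⟨rowMatrix ρ, fun j => (ρ (single j 1)).hasFiniteSupport, hfix, fun i k => ?_,
    (Set.ext hfix).trans (setOf_fMulVec_rowMatrix_eq_self hρ), fun i k => ?_⟩
  · have hbi : b i ∈ LinearMap.ker ρ := hker ▸ Submodule.subset_span ⟨i, rfl⟩
    rw [show B i = b i from rfl, finsum_mul_rowMatrix, LinearMap.mem_ker.mp hbi,
      Finsupp.zero_apply]
  · rw [finsum_rowMatrix_mul_rowMatrix, ← Module.End.mul_eq_comp, hρ.eq]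

/-- for any `u × v` matrix `B` over a field `F` (with `u, v` at most
countable and finitely many nonzero entries in each row of `B`) there is a `v × v`
matrix `C` (finitely many nonzero entries per row) with: (1) `B x = 0 ↔ C x = x`;
(2) `B C = O`; (3) `K(B) = R(C)`; (4) `C² = C`. -/
theorem stmt3 {F : Type} [Field F] {u v : Type} [Countable u] [Countable v]
    (B : u → v → F) (hB : ∀ i, (Function.support (B i)).Finite) :
    ∃ C : v → v → F,
      (∀ i, (Function.support (C i)).Finite) ∧
      (∀ x : v → F, (∀ i, fMulVec B x i = 0) ↔ (∀ i, fMulVec C x i = x i)) ∧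
      (∀ i k, (∑ᶠ j, B i j * C j k) = 0) ∧
      ({x : v → F | ∀ i, fMulVec B x i = 0} =
        {w : v → F | ∃ y : v → F, w = fMulVec C y}) ∧
      (∀ i k, (∑ᶠ j, C i j * C j k) = C i k) :=
  stmt3_general B hB
end

section
/- Let F be a field, let u, v be (possibly countably infinite) index sets, and let A be a u × v matrix over F with finitely many nonzero entries per row. Then there exist an index set J and a J × u matrix B over F with finitely many nonzero entries per row such that B A = O and the kernel of B equals the range of A, i.e. {y ∈ F^u : B y = 0} = {A x : x ∈ F^v}. (In particular, the range of A, viewed as a continuous linear map F^v → F^u with the product topologies, is closed.) -/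
/-!
Take for `J` the space of all linear relations `c : u →₀ F` among the rows of `A`, and let `B`
list them. A vector `y` lies in `K(B)` exactly when it satisfies every relation the rows satisfy,
i.e. when `row i ↦ y i` is a well-defined linear functional on the span of the rows; extending it
to a functional `f` on `v →₀ F`, the vector `x k := f (single k 1)` gives `y = A x`.
Finally `B A = O` because each column of `A` lies in `R(A) = K(B)`.
-/

open scoped BigOperators

open Finsupp

theorem finsum_mul_eq_linearCombination_s6 {R ι : Type*} [Semiring R] (w : ι →₀ R) (y : ι → R) :
    ∑ᶠ i, w i * y i = linearCombination R y w := by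
  rw [linearCombination_apply, Finsupp.sum,
    finsum_eq_finsetSum_of_support_subset _ (s := w.support) fun i hi => by
      simpa using left_ne_zero_of_mul hi]
  rfl

theorem linearMap_eq_linearCombination {R M ι : Type*} [Semiring R] [AddCommMonoid M]
    [Module R M] (f : (ι →₀ R) →ₗ[R] M) :
    f = linearCombination R fun i => f (single i 1) := by
  ext i
  simp

theorem exists_linearMap_apply_eq_iff {K V W ι : Type*} [DivisionRing K] [AddCommGroup V]
    [Module K V] [AddCommGroup W] [Module K W] (r : ι → V) (y : ι → W) :
    (∃ f : V →ₗ[K] W, ∀ i, f (r i) = y i) ↔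
      ∀ c : ι →₀ K, linearCombination K r c = 0 → linearCombination K y c = 0 := by
  constructor
  · rintro ⟨f, hf⟩ c hc
    rw [← funext hf, ← Function.comp_def, ← apply_linearCombination, hc, map_zero]
  · intro h
    set p := LinearMap.ker (linearCombination K r)
    have hle : p ≤ LinearMap.ker (linearCombination K y) := fun c hc => h c hc
    obtain ⟨g, hg⟩ := (p.liftQ _ le_rfl).exists_leftInverse_of_injective
      (p.ker_liftQ_eq_bot _ _ le_rfl)
    refine ⟨p.liftQ (linearCombination K y) hle ∘ₗ g, fun i => ?_⟩
    have hri : r i = p.liftQ _ le_rfl (p.mkQ (single i 1)) := by simp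
    rw [hri, LinearMap.comp_apply, ← LinearMap.comp_apply g, hg]
    simp

theorem exists_fMulVec_eq_iff {F u v : Type} [Field F] (A : u → v → F)
    (hA : ∀ i, (Function.support (A i)).Finite) (y : u → F) :
    (∃ x, y = fMulVec A x) ↔
      ∃ f : (v →₀ F) →ₗ[F] F, ∀ i, f (ofSupportFinite (A i) (hA i)) = y i := by
  have hA' : ∀ x i, fMulVec A x i = linearCombination F x (ofSupportFinite (A i) (hA i)) :=
    fun x i => finsum_mul_eq_linearCombination_s6 (ofSupportFinite (A i) (hA i)) x
  constructor
  · rintro ⟨x, rfl⟩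
    exact ⟨linearCombination F x, fun i => (hA' x i).symm⟩
  · rintro ⟨f, hf⟩
    refine ⟨fun k => f (single k 1), funext fun i => ?_⟩
    rw [hA', ← linearMap_eq_linearCombination, hf]

theorem fMulVec_pi_single {F u v : Type} [Field F] [DecidableEq v] (A : u → v → F) (k : v) :
    fMulVec A (Pi.single k 1) = fun i => A i k := by
  funext i
  rw [fMulVec, finsum_eq_single _ k fun l hl => by simp [hl]]
  simp

theorem stmt6_general {F : Type} [Field F] {u v : Type}
    (A : u → v → F) (hA : ∀ i, (Function.support (A i)).Finite) :
    ∃ (J : Type) (B : J → u → F),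
      (∀ j, (Function.support (B j)).Finite) ∧
      (∀ j k, (∑ᶠ i, B j i * A i k) = 0) ∧
      ({y : u → F | ∀ j, fMulVec B y j = 0} =
        {y : u → F | ∃ x : v → F, y = fMulVec A x}) := by
  classical
  set J := LinearMap.ker (linearCombination F fun i => ofSupportFinite (A i) (hA i))
  have hKR : {y : u → F | ∀ c : J, fMulVec (fun c i => c.1 i) y c = 0} =
      {y : u → F | ∃ x : v → F, y = fMulVec A x} := by
    ext y
    simp only [Set.mem_ofPred_eq, exists_fMulVec_eq_iff A hA, exists_linearMap_apply_eq_iff]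
    exact ⟨fun hy c hc => (finsum_mul_eq_linearCombination_s6 c y).symm.trans (hy ⟨c, hc⟩),
      fun hy c => (finsum_mul_eq_linearCombination_s6 c.1 y).trans (hy c c.2)⟩
  refine ⟨J, fun c i => c.1 i, fun c => c.1.hasFiniteSupport, fun c k => ?_, hKR⟩
  have hcol : (fun i => A i k) ∈ {y : u → F | ∃ x : v → F, y = fMulVec A x} :=
    ⟨Pi.single k 1, (fMulVec_pi_single A k).symm⟩
  rw [← hKR] at hcol
  exact hcol c

/-- for any `u × v` matrix `A` over a field `F` (with `u, v` at most
countable and finitely many nonzero entries per row) there exist an index set `J`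
and a `J × u` matrix `B` (finitely many nonzero entries per row) with `B A = O`
and `K(B) = R(A)`. -/
theorem stmt6 {F : Type} [Field F] {u v : Type} [Countable u] [Countable v]
    (A : u → v → F) (hA : ∀ i, (Function.support (A i)).Finite) :
    ∃ (J : Type) (B : J → u → F),
      (∀ j, (Function.support (B j)).Finite) ∧
      (∀ j k, (∑ᶠ i, B j i * A i k) = 0) ∧
      ({y : u → F | ∀ j, fMulVec B y j = 0} =
        {y : u → F | ∃ x : v → F, y = fMulVec A x}) :=
  stmt6_general A hA
end

section
/- Let S be a nontrivial subsemigroup of (ℚ,+), let u, v be (possibly countably infinite) index sets, and let A be a u × v rational matrix with finitely many nonzero entries per row that is weakly image partition regular over S. Then there exists a u × u rational matrix C (finitely many nonzero entries per row) that is image partition regular over S, with R(C) = R(A) and C² = C. -/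
open scoped BigOperators

/-- Matrix–vector product over ℚ, via `finsum`. -/
noncomputable def mulVecQ {u v : Type} (A : u → v → ℚ) (x : v → ℚ) : u → ℚ :=
  fun i => ∑ᶠ j, A i j * x j

/-- `C` is image partition regular over `S`. -/
def IPRQ {u v : Type} (C : u → v → ℚ) (S : Set ℚ) : Prop :=
  ∀ (k : ℕ) (φ : ℚ → Fin k), ∃ y : v → ℚ,
    (∀ j, y j ∈ S \ {0}) ∧ (∀ i, mulVecQ C y i ∈ S \ {0}) ∧
    (∀ i i', φ (mulVecQ C y i) = φ (mulVecQ C y i'))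

/-- `A` is weakly image partition regular over `S` (with `G` the subgroup
generated by `S`). -/
def WIPRQ {u v : Type} (A : u → v → ℚ) (S G : Set ℚ) : Prop :=
  ∀ (k : ℕ) (φ : ℚ → Fin k), ∃ x : v → ℚ,
    (∀ j, x j ∈ G) ∧ (∀ i, mulVecQ A x i ∈ S \ {0}) ∧
    (∀ i i', φ (mulVecQ A x i) = φ (mulVecQ A x i'))

lemma mulVecQ_mul {α β γ : Type} (M : α → β → ℚ) (N : β → γ → ℚ)
    (hM : ∀ i, (Function.support (M i)).Finite) (hN : ∀ k, (Function.support (N k)).Finite)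
    (x : γ → ℚ) (i : α) :
    mulVecQ (fun i j => ∑ᶠ k, M i k * N k j) x i = mulVecQ M (mulVecQ N x) i := by
  classical
  set K := (hM i).toFinset with hK
  set J := K.biUnion (fun k => (hN k).toFinset) with hJ
  have step2 : ∀ j, (∑ᶠ k, M i k * N k j) = ∑ k ∈ K, M i k * N k j := by
    intro j
    apply finsum_eq_finset_sum_of_support_subset
    intro k hk
    simp only [Function.mem_support] at hk
    simp only [hK, Set.Finite.coe_toFinset, Function.mem_support]
    intro h; exact hk (by simp [h])
  have hNJ : ∀ k ∈ K, ∀ j, j ∉ J → N k j = 0 := by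
    intro k hk j hj
    by_contra h
    exact hj (Finset.mem_biUnion.2 ⟨k, hk, by simp [Set.Finite.mem_toFinset, Function.mem_support, h]⟩)
  have lhs : mulVecQ (fun i j => ∑ᶠ k, M i k * N k j) x i
      = ∑ j ∈ J, (∑ k ∈ K, M i k * N k j) * x j := by
    rw [mulVecQ]
    rw [finsum_eq_finset_sum_of_support_subset _ (s := J)]
    · exact Finset.sum_congr rfl fun j _ => by rw [step2]
    · intro j hj
      simp only [Function.mem_support] at hj
      by_contra hjJ
      apply hj
      rw [step2]
      rw [Finset.sum_eq_zero, zero_mul]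
      intro k hk
      rw [hNJ k hk j hjJ, mul_zero]
  have rhs : mulVecQ M (mulVecQ N x) i = ∑ k ∈ K, M i k * ∑ j ∈ J, N k j * x j := by
    rw [mulVecQ]
    rw [finsum_eq_finset_sum_of_support_subset _ (s := K)]
    · refine Finset.sum_congr rfl fun k hk => ?_
      congr 1
      apply finsum_eq_finset_sum_of_support_subset
      intro j hj
      simp only [Function.mem_support] at hj
      by_contra hjJ
      exact hj (by rw [hNJ k hk j hjJ, zero_mul])
    · intro k hk
      simp only [Function.mem_support] at hk
      simp only [hK, Set.Finite.coe_toFinset, Function.mem_support]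
      intro h; exact hk (by simp [h])
  rw [lhs, rhs]
  simp_rw [Finset.sum_mul, Finset.mul_sum, ← mul_assoc]
  exact Finset.sum_comm

lemma exists_geninv {u v : Type} (A : u → v → ℚ) (hA : ∀ i, (Function.support (A i)).Finite) :
    ∃ B : v → u → ℚ, (∀ k, (Function.support (B k)).Finite) ∧
      ∀ i m, (∑ᶠ j, (∑ᶠ k, A i k * B k j) * A j m) = A i m := by
  classical
  -- rows of A as finsupps
  let rowA : u → (v →₀ ℚ) := fun i => Finsupp.ofSupportFinite (A i) (hA i)
  have rowA_apply : ∀ i j, rowA i j = A i j := fun i j => rfl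
  let T : (u →₀ ℚ) →ₗ[ℚ] (v →₀ ℚ) :=
    Finsupp.lsum ℚ (fun i => LinearMap.toSpanSingleton ℚ _ (rowA i))
  have hT_single : ∀ i, T (Finsupp.single i 1) = rowA i := by
    intro i
    simp [T, LinearMap.toSpanSingleton_apply]
  -- splitting
  obtain ⟨q, hq⟩ := Submodule.exists_isCompl (LinearMap.range T)
  obtain ⟨σ, hσ⟩ := T.rangeRestrict.exists_rightInverse_of_surjective T.range_rangeRestrict
  let Sm : (v →₀ ℚ) →ₗ[ℚ] (u →₀ ℚ) :=
    σ.comp ((LinearMap.range T).linearProjOfIsCompl q hq)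
  have hTσ : ∀ y : LinearMap.range T, T (σ y) = (y : v →₀ ℚ) := by
    intro y
    have := congrFun (congrArg DFunLike.coe hσ) y
    simpa [LinearMap.rangeRestrict, Subtype.ext_iff] using congrArg Subtype.val this
  have hTST : ∀ f : u →₀ ℚ, T (Sm (T f)) = T f := by
    intro f
    have hmem : T f ∈ LinearMap.range T := LinearMap.mem_range_self T f
    have : Sm (T f) = σ ⟨T f, hmem⟩ := by
      simp only [Sm, LinearMap.comp_apply]
      congr 1
      exact Submodule.linearProjOfIsCompl_apply_left hq ⟨T f, hmem⟩
    rw [this, hTσ ⟨T f, hmem⟩]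
  -- evaluation of T
  have hT_eval : ∀ (f : u →₀ ℚ) (m : v), T f m = ∑ᶠ j, f j * A j m := by
    intro f m
    have : T f m = ∑ j ∈ f.support, f j * A j m := by
      simp only [T, Finsupp.lsum_apply, Finsupp.sum_apply, LinearMap.toSpanSingleton_apply]
      rw [Finsupp.sum]
      exact Finset.sum_congr rfl fun j _ => by
        simp [Finsupp.smul_apply, rowA_apply, smul_eq_mul]
    rw [this]
    symm
    apply finsum_eq_finset_sum_of_support_subset
    intro j hj
    simp only [Function.mem_support] at hj
    simp only [Finset.coe_sort_coe, Finset.mem_coe, Finsupp.mem_support_iff]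
    intro h; exact hj (by rw [h, zero_mul])
  -- define B
  set B : v → u → ℚ := fun k j => Sm (Finsupp.single k 1) j with hB
  refine ⟨B, fun k => (Sm (Finsupp.single k 1)).finite_support, ?_⟩
  intro i m
  set g : u →₀ ℚ := Sm (T (Finsupp.single i 1)) with hg
  have hgj : ∀ j, g j = ∑ᶠ k, A i k * B k j := by
    intro j
    have h1 : T (Finsupp.single i 1) = (rowA i).sum (fun k c => Finsupp.single k c) := by
      rw [hT_single, Finsupp.sum_single]
    have h2 : g j = ∑ k ∈ (rowA i).support, A i k * B k j := by
      rw [hg, h1, map_finsuppSum, Finsupp.sum_apply, Finsupp.sum]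
      refine Finset.sum_congr rfl fun k _ => ?_
      have : (Finsupp.single k (rowA i k)) = (rowA i k) • Finsupp.single k (1:ℚ) := by
        rw [Finsupp.smul_single, smul_eq_mul, mul_one]
      rw [this, map_smul]
      simp [rowA_apply, hB, smul_eq_mul]
    rw [h2]
    symm
    apply finsum_eq_finset_sum_of_support_subset
    intro k hk
    simp only [Function.mem_support] at hk
    simp only [Finset.coe_sort_coe, Finset.mem_coe, Finsupp.mem_support_iff]
    intro h
    exact hk (by rw [show A i k = rowA i k from rfl, h, zero_mul])
  have key : T g = T (Finsupp.single i 1) := hTST _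
  have : (T g) m = (T (Finsupp.single i 1)) m := by rw [key]
  rw [hT_eval g m, hT_eval (Finsupp.single i 1) m] at this
  have h3 : (∑ᶠ j, (∑ᶠ k, A i k * B k j) * A j m) = ∑ᶠ j, g j * A j m :=
    finsum_congr fun j => by rw [hgj j]
  rw [h3, this]
  rw [finsum_eq_single _ i (fun j hj => by rw [Finsupp.single_apply, if_neg (Ne.symm hj), zero_mul])]
  simp

/-- for a nontrivial subsemigroup `S` of `(ℚ,+)` and a row-finite
`u × v` rational matrix `A` weakly image partition regular over `S`, there is a
row-finite `u × u` rational matrix `C` image partition regular over `S` with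
`R(C) = R(A)` and `C² = C`. -/
theorem stmt7 (S : AddSubsemigroup ℚ) (hS : ∃ s ∈ S, s ≠ (0 : ℚ))
    {u v : Type} [Countable u] [Countable v]
    (A : u → v → ℚ) (hA : ∀ i, (Function.support (A i)).Finite)
    (hwipr : WIPRQ A (S : Set ℚ) ((AddSubgroup.closure (S : Set ℚ) : AddSubgroup ℚ) : Set ℚ)) :
    ∃ C : u → u → ℚ,
      (∀ i, (Function.support (C i)).Finite) ∧
      IPRQ C (S : Set ℚ) ∧
      ({w : u → ℚ | ∃ z : u → ℚ, w = mulVecQ C z} =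
        {w : u → ℚ | ∃ z : v → ℚ, w = mulVecQ A z}) ∧
      (∀ i k, (∑ᶠ j, C i j * C j k) = C i k) := by
  classical
  obtain ⟨B, hB, hABA⟩ := exists_geninv A hA
  set C : u → u → ℚ := fun i j => ∑ᶠ k, A i k * B k j with hCdef
  have hC : ∀ i, (Function.support (C i)).Finite := by
    intro i
    apply Set.Finite.subset (Set.Finite.biUnion (hA i) (fun k _ => hB k))
    intro j hj
    simp only [Function.mem_support] at hj
    by_contra h
    apply hj
    apply finsum_eq_zero_of_forall_eq_zero
    intro k
    by_cases hk : A i k = 0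
    · rw [hk, zero_mul]
    · have : B k j = 0 := by
        by_contra hb
        exact h (Set.mem_biUnion hk hb)
      rw [this, mul_zero]
  have hprod : ∀ (z : u → ℚ) i, mulVecQ C z i = mulVecQ A (mulVecQ B z) i :=
    fun z i => mulVecQ_mul A B hA hB z i
  have hfix : ∀ (x : v → ℚ) i, mulVecQ C (mulVecQ A x) i = mulVecQ A x i := by
    intro x i
    rw [← mulVecQ_mul C A hC hA x i]
    have hCA : (fun i j => ∑ᶠ k, C i k * A k j) = A := by
      funext i j
      exact hABA i j
    rw [hCA]
  refine ⟨C, hC, ?_, ?_, ?_⟩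
  · intro k φ
    obtain ⟨x, -, hx2, hx3⟩ := hwipr k φ
    have heq : mulVecQ C (mulVecQ A x) = mulVecQ A x := funext (hfix x)
    exact ⟨mulVecQ A x, hx2, fun i => by rw [heq]; exact hx2 i,
      fun i i' => by rw [heq]; exact hx3 i i'⟩
  · ext w
    simp only [Set.mem_setOf_eq]
    constructor
    · rintro ⟨z, rfl⟩
      exact ⟨mulVecQ B z, funext fun i => hprod z i⟩
    · rintro ⟨z, rfl⟩
      exact ⟨mulVecQ A z, funext fun i => (hfix z i).symm⟩
  · intro i m
    set e : u → ℚ := fun j => if j = m then 1 else 0 with he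
    have hcol : ∀ j, mulVecQ C e j = C j m := by
      intro j
      rw [mulVecQ]
      rw [finsum_eq_single _ m (fun l hl => by simp [he, hl])]
      simp [he]
    have h0 : (∑ᶠ j, C i j * C j m) = mulVecQ C (mulVecQ C e) i := by
      simp only [mulVecQ]
      apply finsum_congr
      intro j
      rw [← hcol j, mulVecQ]
    rw [h0]
    have h1 : mulVecQ C e = mulVecQ A (mulVecQ B e) := funext fun i => hprod e i
    rw [h1, hfix (mulVecQ B e) i, ← h1, hcol i]
end

section
/- Let u, v be (possibly countably infinite) index sets and let A be a u × v rational matrix with finitely many nonzero entries per row. Then there exist a set J ⊆ u and a J × u rational matrix B with finitely many nonzero entries per row such that {y ∈ (ℚ \ {0})^u : B y = 0} = {A x : x ∈ ℚ^v} ∩ (ℚ \ {0})^u. Moreover, A is weakly image partition regular over ℚ if and only if B is kernel partition regular over ℚ. -/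
open scoped BigOperators

/-- `A` is weakly image partition regular over ℚ: for every finite colouring of
`ℚ \ {0}` there is `x ∈ ℚ^v` with the entries of `A x` nonzero and
monochromatic. -/
def WIPRoverQ {u v : Type} (A : u → v → ℚ) : Prop :=
  ∀ (k : ℕ) (φ : ℚ → Fin k), ∃ x : v → ℚ,
    (∀ i, mulVecQ A x i ≠ 0) ∧
    (∀ i i', φ (mulVecQ A x i) = φ (mulVecQ A x i'))

/-- `B` is kernel partition regular over ℚ: for every finite colouring of
`ℚ \ {0}` there is a monochromatic vector with nonzero entries in the kernel
of `B`. -/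
def KPRoverQ {w u : Type} (B : w → u → ℚ) : Prop :=
  ∀ (k : ℕ) (φ : ℚ → Fin k), ∃ y : u → ℚ,
    (∀ i, y i ≠ 0) ∧ (∀ j, mulVecQ B y j = 0) ∧
    (∀ i i', φ (y i) = φ (y i'))

open Function

/-- The linear functional on `α →₀ ℚ` given by pairing with `y : α → ℚ`. -/
noncomputable def phiQ {α : Type} (y : α → ℚ) : (α →₀ ℚ) →ₗ[ℚ] ℚ :=
  Finsupp.lsum ℚ fun i => LinearMap.toSpanSingleton ℚ ℚ (y i)

lemma phiQ_single {α : Type} (y : α → ℚ) (i : α) : phiQ y (Finsupp.single i 1) = y i := by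
  simp [phiQ, LinearMap.toSpanSingleton_apply]

lemma phiQ_apply {α : Type} (y : α → ℚ) (c : α →₀ ℚ) :
    phiQ y c = ∑ᶠ i, c i * y i := by
  rw [finsum_eq_finset_sum_of_support_subset _ (s := c.support)]
  · simp [phiQ, Finsupp.sum, LinearMap.toSpanSingleton_apply, smul_eq_mul]
  · intro i hi
    simp only [Function.mem_support, ne_eq] at hi
    simp only [Finset.coe_sort_coe, Finset.mem_coe, Finsupp.mem_support_iff]
    intro h
    exact hi (by rw [h, zero_mul])

/-- any linear functional on finsupps is a pairing. -/
lemma phiQ_of_dual {α : Type} (f : (α →₀ ℚ) →ₗ[ℚ] ℚ) (c : α →₀ ℚ) :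
    f c = phiQ (fun j => f (Finsupp.single j 1)) c := by
  have h : c = c.sum fun j r => r • Finsupp.single j (1 : ℚ) := by
    conv_lhs => rw [← Finsupp.sum_single c]
    exact Finsupp.sum_congr fun j _ => by rw [Finsupp.smul_single, smul_eq_mul, mul_one]
  conv_lhs => rw [h]
  rw [map_finsuppSum, phiQ_apply,
    finsum_eq_finset_sum_of_support_subset _ (s := c.support)]
  · exact Finset.sum_congr rfl fun j _ => by
      show f ((c j) • Finsupp.single j 1) = c j * f (Finsupp.single j 1)
      rw [map_smul, smul_eq_mul]
  · intro i hi
    simp only [Function.mem_support, ne_eq] at hi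
    simp only [Finset.coe_sort_coe, Finset.mem_coe, Finsupp.mem_support_iff]
    intro h0
    exact hi (by rw [h0, zero_mul])

section rows
variable {u v : Type} (A : u → v → ℚ) (hA : ∀ i, (Function.support (A i)).Finite)

/-- row `i` of `A` as a finsupp. -/
noncomputable def rowF (i : u) : v →₀ ℚ :=
  ⟨(hA i).toFinset, A i, fun j => by simp [Set.Finite.mem_toFinset, Function.mem_support]⟩

@[simp] lemma rowF_apply (i : u) (j : v) : rowF A hA i j = A i j := rfl

/-- transpose-like map on finsupps. -/
noncomputable def gmap : (u →₀ ℚ) →ₗ[ℚ] (v →₀ ℚ) :=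
  Finsupp.lsum ℚ fun i => LinearMap.toSpanSingleton ℚ (v →₀ ℚ) (rowF A hA i)

lemma gmap_single (i : u) : gmap A hA (Finsupp.single i 1) = rowF A hA i := by
  simp [gmap, LinearMap.toSpanSingleton_apply]

lemma mulVecQ_eq_phiQ (x : v → ℚ) (i : u) : mulVecQ A x i = phiQ x (rowF A hA i) := by
  rw [phiQ_apply]; rfl

/-- Central equivalence: `y` is in the image of `A` iff `y` annihilates all relations. -/
lemma mem_image_iff (y : u → ℚ) :
    (∃ x : v → ℚ, y = mulVecQ A x) ↔ ∀ c ∈ LinearMap.ker (gmap A hA), phiQ y c = 0 := by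
  constructor
  · rintro ⟨x, rfl⟩ c hc
    have key : phiQ (mulVecQ A x) = (phiQ x).comp (gmap A hA) := by
      apply Finsupp.lhom_ext
      intro i b
      have hb : Finsupp.single i b = b • Finsupp.single i (1:ℚ) := by
        rw [Finsupp.smul_single, smul_eq_mul, mul_one]
      rw [hb, map_smul, map_smul, phiQ_single]
      simp only [LinearMap.coe_comp, Function.comp_apply]
      rw [gmap_single, ← mulVecQ_eq_phiQ A hA]
    rw [key]
    simp only [LinearMap.coe_comp, Function.comp_apply]
    rw [LinearMap.mem_ker.mp hc, map_zero]
  · intro h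
    have hmem : phiQ y ∈ (LinearMap.ker (gmap A hA)).dualAnnihilator := by
      rw [Submodule.mem_dualAnnihilator]; exact h
    rw [← LinearMap.range_dualMap_eq_dualAnnihilator_ker] at hmem
    obtain ⟨f, hf⟩ := hmem
    refine ⟨fun j => f (Finsupp.single j 1), funext fun i => ?_⟩
    have h1 : y i = phiQ y (Finsupp.single i 1) := (phiQ_single y i).symm
    rw [h1, ← hf]
    simp only [LinearMap.dualMap_apply, gmap_single]
    rw [mulVecQ_eq_phiQ A hA, ← phiQ_of_dual]
end rows


lemma exists_spanning {u : Type} [Countable u] (R : Submodule ℚ (u →₀ ℚ)) :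
    ∃ b : u → (u →₀ ℚ), (∀ i, b i ∈ R) ∧ R ≤ Submodule.span ℚ (Set.range b) := by
  by_cases hfin : Finite u
  · haveI := Fintype.ofFinite u
    haveI : Module.Finite ℚ (u →₀ ℚ) := Module.Finite.equiv
      (Finsupp.linearEquivFunOnFinite ℚ ℚ u).symm
    set d := Module.finrank ℚ R with hd
    let bas := Module.finBasis ℚ R
    have hcard : d ≤ Fintype.card u := by
      calc d ≤ Module.finrank ℚ (u →₀ ℚ) := Submodule.finrank_le R
        _ = Fintype.card u := by rw [Module.finrank_finsupp_self]
    obtain ⟨e⟩ : Nonempty (Fin d ↪ u) :=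
      Function.Embedding.nonempty_of_card_le (by simpa using hcard)
    classical
    refine ⟨fun i => if h : ∃ k, e k = i then ((bas h.choose : R) : u →₀ ℚ) else 0,
      fun i => ?_, fun c hc => ?_⟩
    · by_cases h : ∃ k, e k = i
      · simp only [dif_pos h]; exact (bas h.choose).2
      · simp only [dif_neg h]; exact R.zero_mem
    · have h1 : (⟨c, hc⟩ : R) ∈ Submodule.span ℚ (Set.range bas) := by
        rw [bas.span_eq]; trivial
      have h2 : c ∈ Submodule.map R.subtype (Submodule.span ℚ (Set.range bas)) :=
        ⟨⟨c, hc⟩, h1, rfl⟩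
      rw [Submodule.map_span] at h2
      refine Submodule.span_mono ?_ h2
      rintro _ ⟨_, ⟨k, rfl⟩, rfl⟩
      refine ⟨e k, ?_⟩
      have h : ∃ k', e k' = e k := ⟨k, rfl⟩
      simp only [dif_pos h]
      congr 1
      exact congrArg bas (e.injective h.choose_spec)
  · haveI : Infinite u := not_finite_iff_infinite.mp hfin
    haveI := Encodable.ofCountable u
    haveI := Denumerable.ofEncodableOfInfinite u
    let e := Denumerable.eqv u
    haveI : Nonempty R := ⟨0⟩
    obtain ⟨f, hf⟩ := exists_surjective_nat R
    refine ⟨fun i => (f (e i) : u →₀ ℚ), fun i => (f (e i)).2, fun c hc => ?_⟩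
    obtain ⟨n, hn⟩ := hf ⟨c, hc⟩
    refine Submodule.subset_span ⟨e.symm n, ?_⟩
    simp [hn]

/-- for a row-finite `u × v` rational matrix `A` (`u, v` at most
countable) there exist `J ⊆ u` and a row-finite `J × u` matrix `B` with
`{y ∈ (ℚ \ {0})^u : B y = 0} = {A x : x ∈ ℚ^v} ∩ (ℚ \ {0})^u`; moreover `A` is
weakly image partition regular over ℚ iff `B` is kernel partition regular
over ℚ. -/
theorem stmt8 {u v : Type} [Countable u] [Countable v]
    (A : u → v → ℚ) (hA : ∀ i, (Function.support (A i)).Finite) :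
    ∃ (J : Set u) (B : J → u → ℚ),
      (∀ j, (Function.support (B j)).Finite) ∧
      ({y : u → ℚ | (∀ i, y i ≠ 0) ∧ ∀ j : J, mulVecQ B y j = 0} =
        {y : u → ℚ | ∃ x : v → ℚ, y = mulVecQ A x} ∩ {y : u → ℚ | ∀ i, y i ≠ 0}) ∧
      (WIPRoverQ A ↔ KPRoverQ B) := by
  classical
  obtain ⟨b, hbmem, hbspan⟩ := exists_spanning (LinearMap.ker (gmap A hA))
  set J : Set u := Set.univ with hJ
  set B : J → u → ℚ := fun j => ⇑(b j.1) with hBdef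
  have hBrow : ∀ j, (Function.support (B j)).Finite := fun j => (b j.1).finite_support
  have hBy : ∀ (y : u → ℚ) (j : J), mulVecQ B y j = phiQ y (b j.1) := by
    intro y j
    rw [phiQ_apply]
    rfl
  have hset : ({y : u → ℚ | (∀ i, y i ≠ 0) ∧ ∀ j : J, mulVecQ B y j = 0} =
        {y : u → ℚ | ∃ x : v → ℚ, y = mulVecQ A x} ∩ {y : u → ℚ | ∀ i, y i ≠ 0}) := by
    ext y
    simp only [Set.mem_setOf_eq, Set.mem_inter_iff]
    constructor
    · rintro ⟨hnz, hker⟩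
      refine ⟨(mem_image_iff A hA y).mpr ?_, hnz⟩
      intro c hc
      have hle : Submodule.span ℚ (Set.range b) ≤ LinearMap.ker (phiQ y) := by
        rw [Submodule.span_le]
        rintro _ ⟨i, rfl⟩
        have hz := hker ⟨i, Set.mem_univ i⟩
        rw [hBy] at hz
        exact hz
      exact hle (hbspan hc)
    · rintro ⟨hx, hnz⟩
      refine ⟨hnz, fun j => ?_⟩
      rw [hBy]
      exact (mem_image_iff A hA y).mp hx _ (hbmem j.1)
  refine ⟨J, B, hBrow, hset, ?_, ?_⟩
  · intro h k φ
    obtain ⟨x, hx0, hxm⟩ := h k φ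
    have hmem : mulVecQ A x ∈ {y : u → ℚ | (∀ i, y i ≠ 0) ∧ ∀ j : J, mulVecQ B y j = 0} := by
      rw [hset]
      exact ⟨⟨x, rfl⟩, hx0⟩
    exact ⟨mulVecQ A x, hmem.1, hmem.2, hxm⟩
  · intro h k φ
    obtain ⟨y, hy0, hyk, hym⟩ := h k φ
    have hmem : y ∈ {y : u → ℚ | ∃ x : v → ℚ, y = mulVecQ A x} ∩ {y : u → ℚ | ∀ i, y i ≠ 0} := by
      rw [← hset]
      exact ⟨hy0, hyk⟩
    obtain ⟨x, hxy⟩ := hmem.1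
    refine ⟨x, fun i => by rw [← hxy]; exact hy0 i, fun i i' => by rw [← hxy]; exact hym i i'⟩
end

section
/- Let u, v be (possibly countably infinite) index sets and let A be a u × v rational matrix with finitely many nonzero entries per row that is weakly image partition regular over ℚ. Then there exist a set T ⊆ u with |T| ≤ |v| and a u × T rational matrix D that is image partition regular over ℚ such that {A x : x ∈ ℚ^v} ∩ (ℚ \ {0})^u = {D y : y ∈ (ℚ \ {0})^T} ∩ (ℚ \ {0})^u. -/
open scoped BigOperators

/-- `D` is image partition regular over ℚ. -/
def IPRoverQ {u v : Type} (D : u → v → ℚ) : Prop :=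
  ∀ (k : ℕ) (φ : ℚ → Fin k), ∃ y : v → ℚ,
    (∀ j, y j ≠ 0) ∧ (∀ i, mulVecQ D y i ≠ 0) ∧
    (∀ i i', φ (mulVecQ D y i) = φ (mulVecQ D y i'))

/-! Choose rows of `A`, indexed by `T ⊆ u`, forming a basis of the row space, and let `D` express
every row of `A` in these basis rows, so that `A x = D ((A x)|_T)`. The basis rows are linearly
independent, so every `z : T → ℚ` is `(A x)|_T` for some `x`; hence `A` and `D` have the same
image. A monochromatic image `A x` with nonzero entries gives the monochromatic image `D y` for
`y = (A x)|_T`, whose entries are entries of `A x` and hence nonzero. -/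

open Finsupp

section LinearAlgebra

variable {K ι V : Type*} [Field K] [AddCommGroup V] [Module K V]

theorem exists_linearIndepOn_forall_linearCombination_eq (r : ι → V) :
    ∃ (T : Set ι) (c : ι → T →₀ K), LinearIndepOn K r T ∧
      ∀ i, linearCombination K (fun t : T => r t) (c i) = r i := by
  obtain ⟨T, -, -, hspan, hli⟩ :=
    exists_linearIndepOn_extension (linearIndepOn_empty K r) (Set.empty_subset Set.univ)
  have hmem (i : ι) : ∃ l : T →₀ K, linearCombination K (fun t : T => r t) l = r i := by
    rw [← LinearMap.mem_range, range_linearCombination, ← Set.image_eq_range]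
    exact hspan ⟨i, trivial, rfl⟩
  choose c hc using hmem
  exact ⟨T, c, hli, hc⟩

theorem LinearIndependent.exists_linearMap_apply_eq {V' : Type*} [AddCommGroup V'] [Module K V']
    {w : ι → V} (hw : LinearIndependent K w) (z : ι → V') :
    ∃ g : V →ₗ[K] V', ∀ i, g (w i) = z i := by
  obtain ⟨g, hg⟩ := LinearMap.exists_extend ((Module.Basis.span hw).constr K z)
  refine ⟨g, fun i => ?_⟩
  have h := congr($hg (Module.Basis.span hw i))
  rwa [LinearMap.comp_apply, Module.Basis.constr_basis, Submodule.subtype_apply,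
    Module.Basis.span_apply] at h

theorem LinearIndependent.exists_linearCombination_apply_eq {α : Type*} {w : ι → α →₀ K}
    (hw : LinearIndependent K w) (z : ι → K) :
    ∃ x : α → K, ∀ i, linearCombination K x (w i) = z i := by
  obtain ⟨g, hg⟩ := hw.exists_linearMap_apply_eq z
  have hx : linearCombination K (fun j => g (single j 1)) = g := by ext; simp
  exact ⟨fun j => g (single j 1), by simpa [hx] using hg⟩

theorem finsum_mul_eq_linearCombination_s13 {α : Type*} (f : α →₀ K) (x : α → K) :
    ∑ᶠ j, f j * x j = linearCombination K x f := by
  rw [finsum_eq_sum_of_support_subset _ ((Function.support_mul_subset_left _ _).trans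
    f.fun_support_eq.subset), linearCombination_apply, Finsupp.sum]
  simp only [smul_eq_mul, mul_comm]

end LinearAlgebra

section Regularity

variable {u v : Type} {A : u → v → ℚ} {T : Set u} {D : u → T → ℚ}

theorem WIPRoverQ.iproverQ_of_factor
    (hfac : ∀ x, mulVecQ A x = mulVecQ D fun t => mulVecQ A x t)
    (hw : WIPRoverQ A) : IPRoverQ D := by
  intro k φ
  obtain ⟨x, hx0, hxmono⟩ := hw k φ
  refine ⟨fun t => mulVecQ A x t, fun t => hx0 t, ?_, ?_⟩ <;> rw [← hfac]
  exacts [hx0, hxmono]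

theorem image_inter_nonzero_eq_of_factor
    (hfac : ∀ x, mulVecQ A x = mulVecQ D fun t => mulVecQ A x t)
    (hsurj : ∀ z : T → ℚ, ∃ x, ∀ t : T, mulVecQ A x t = z t) :
    {y : u → ℚ | ∃ x : v → ℚ, y = mulVecQ A x} ∩ {y : u → ℚ | ∀ i, y i ≠ 0} =
      {y : u → ℚ | ∃ z : T → ℚ, (∀ t, z t ≠ 0) ∧ y = mulVecQ D z} ∩
        {y : u → ℚ | ∀ i, y i ≠ 0} := by
  ext y
  refine and_congr_left fun hy0 => ⟨?_, ?_⟩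
  · rintro ⟨x, rfl⟩
    exact ⟨fun t => mulVecQ A x t, fun t => hy0 t, hfac x⟩
  · rintro ⟨z, -, rfl⟩
    obtain ⟨x, hx⟩ := hsurj z
    exact ⟨x, by rw [hfac x, funext hx]⟩

end Regularity

theorem stmt13_general {u v : Type}
    (A : u → v → ℚ) (hA : ∀ i, (Function.support (A i)).Finite)
    (hwipr : WIPRoverQ A) :
    ∃ (T : Set u) (D : u → T → ℚ),
      Cardinal.mk T ≤ Cardinal.mk v ∧
      (∀ i, (Function.support (D i)).Finite) ∧
      IPRoverQ D ∧
      ({y : u → ℚ | ∃ x : v → ℚ, y = mulVecQ A x} ∩ {y : u → ℚ | ∀ i, y i ≠ 0} =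
        {y : u → ℚ | ∃ z : T → ℚ, (∀ t, z t ≠ 0) ∧ y = mulVecQ D z} ∩
          {y : u → ℚ | ∀ i, y i ≠ 0}) := by
  let r (i : u) : v →₀ ℚ := ofSupportFinite (A i) (hA i)
  have hAr (x : v → ℚ) (i : u) : mulVecQ A x i = linearCombination ℚ x (r i) :=
    finsum_mul_eq_linearCombination_s13 (r i) x
  obtain ⟨T, c, hli, hc⟩ := exists_linearIndepOn_forall_linearCombination_eq (K := ℚ) r
  let D (i : u) (t : T) : ℚ := c i t
  have hfac (x : v → ℚ) : mulVecQ A x = mulVecQ D fun t => mulVecQ A x t := by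
    funext i
    change _ = ∑ᶠ t, c i t * mulVecQ A x t
    simp only [finsum_mul_eq_linearCombination_s13, hAr]
    rw [← hc i, apply_linearCombination]
    rfl
  have hsurj (z : T → ℚ) : ∃ x, ∀ t : T, mulVecQ A x t = z t := by
    simpa only [hAr] using hli.exists_linearCombination_apply_eq z
  refine ⟨T, D, ?_, fun i => (c i).hasFiniteSupport, hwipr.iproverQ_of_factor hfac,
    image_inter_nonzero_eq_of_factor hfac hsurj⟩
  simpa using hli.cardinal_le_rank

/-- for a row-finite `u × v` rational matrix `A` (`u, v` at most
countable) weakly image partition regular over ℚ, there exist `T ⊆ u` with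
`|T| ≤ |v|` and a `u × T` rational matrix `D` (row-finite), image partition
regular over ℚ, with
`{A x : x ∈ ℚ^v} ∩ (ℚ\{0})^u = {D y : y ∈ (ℚ\{0})^T} ∩ (ℚ\{0})^u`. -/
theorem stmt13 {u v : Type} [Countable u] [Countable v]
    (A : u → v → ℚ) (hA : ∀ i, (Function.support (A i)).Finite)
    (hwipr : WIPRoverQ A) :
    ∃ (T : Set u) (D : u → T → ℚ),
      Cardinal.mk T ≤ Cardinal.mk v ∧
      (∀ i, (Function.support (D i)).Finite) ∧
      IPRoverQ D ∧
      ({y : u → ℚ | ∃ x : v → ℚ, y = mulVecQ A x} ∩ {y : u → ℚ | ∀ i, y i ≠ 0} =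
        {y : u → ℚ | ∃ z : T → ℚ, (∀ t, z t ≠ 0) ∧ y = mulVecQ D z} ∩
          {y : u → ℚ | ∀ i, y i ≠ 0}) :=
  stmt13_general A hA hwipr
end

section
/- Let G be a proper subgroup of (ℚ,+). Choose d ∈ ℕ and p as follows: if 1 ∈ G, pick d with 1/d ∉ G and set p = 1; if 1 ∉ G, pick d ∈ ℕ ∩ G and set p = d. Let A be the ω × 2 matrix with rows (1, ld) for l = 0, 1, 2, …. Suppose C is an ω × 2 rational matrix with {A x : x ∈ G²} ∩ (G \ {0})^ω ⊆ {C y : y ∈ (G \ {0})²}. Then there exist x₀, x₁ ∈ G \ {0}, distinct m, n ∈ ℕ, and k ∈ ℚ \ {0} such that k = d x₀ x₁ (m − n) and for all l, k c_{l,0} = p d x₁ (l − n) and k c_{l,1} = p d x₀ (m − l). -/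
open scoped BigOperators

private lemma mulVecQ_two (B : ℕ → Fin 2 → ℚ) (x : Fin 2 → ℚ) (l : ℕ) :
    mulVecQ B x l = B l 0 * x 0 + B l 1 * x 1 := by
  simp [mulVecQ, finsum_eq_sum_of_fintype, Fin.sum_univ_two]

/-- let `G` be a proper subgroup of `(ℚ,+)`, with `d ∈ ℕ` and `p`
chosen so that if `1 ∈ G` then `1/d ∉ G` and `p = 1`, while if `1 ∉ G` then
`d ∈ G` and `p = d`. Let `A` be the `ω × 2` matrix with rows `(1, l·d)`.
If `C` is an `ω × 2` rational matrix with
`{A x : x ∈ G²} ∩ (G\{0})^ω ⊆ {C y : y ∈ (G\{0})²}`, then there are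
`x₀, x₁ ∈ G \ {0}`, distinct `m, n ∈ ℕ` and `k ∈ ℚ \ {0}` with
`k = d·x₀·x₁·(m−n)`, `k·c_{l,0} = p·d·x₁·(l−n)` and `k·c_{l,1} = p·d·x₀·(m−l)`
for all `l`. -/
theorem stmt14 (G : AddSubgroup ℚ) (hproper : G ≠ ⊤)
    (d : ℕ) (hdpos : 0 < d) (p : ℚ)
    (hcase1 : (1 : ℚ) ∈ G → ((1 / (d : ℚ)) ∉ G ∧ p = 1))
    (hcase2 : (1 : ℚ) ∉ G → ((d : ℚ) ∈ G ∧ p = (d : ℚ)))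
    (A : ℕ → Fin 2 → ℚ) (hAdef : A = fun (l : ℕ) => ![1, (l : ℚ) * d])
    (C : ℕ → Fin 2 → ℚ)
    (hsub : {w : ℕ → ℚ | ∃ x : Fin 2 → ℚ, (∀ j, x j ∈ G) ∧ w = mulVecQ A x} ∩
        {w : ℕ → ℚ | ∀ l, w l ∈ (G : Set ℚ) \ {0}} ⊆
      {w : ℕ → ℚ | ∃ y : Fin 2 → ℚ, (∀ j, y j ∈ (G : Set ℚ) \ {0}) ∧ w = mulVecQ C y}) :
    ∃ x₀ x₁ : ℚ, x₀ ∈ (G : Set ℚ) \ {0} ∧ x₁ ∈ (G : Set ℚ) \ {0} ∧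
      ∃ m n : ℕ, m ≠ n ∧ ∃ k : ℚ, k ≠ 0 ∧
        k = (d : ℚ) * x₀ * x₁ * ((m : ℚ) - (n : ℚ)) ∧
        ∀ l : ℕ, k * C l 0 = p * d * x₁ * ((l : ℚ) - (n : ℚ)) ∧
          k * C l 1 = p * d * x₀ * ((m : ℚ) - (l : ℚ)) := by
  subst hAdef
  have hdQ : (d : ℚ) ≠ 0 := Nat.cast_ne_zero.mpr hdpos.ne'
  have hp : p ∈ G ∧ p ≠ 0 := by
    by_cases h1 : (1 : ℚ) ∈ G
    · obtain ⟨-, hp1⟩ := hcase1 h1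
      exact ⟨hp1 ▸ h1, by rw [hp1]; norm_num⟩
    · obtain ⟨hdG, hp1⟩ := hcase2 h1
      exact ⟨hp1 ▸ hdG, by rw [hp1]; exact hdQ⟩
  obtain ⟨hpG, hp0⟩ := hp
  have hzmul : ∀ c : ℤ, (c : ℚ) * p ∈ G := by
    intro c
    simpa [zsmul_eq_mul] using AddSubgroup.zsmul_mem G hpG c
  -- the key witness machine
  have key : ∀ α β : ℤ, (∀ l : ℕ, ((α : ℚ) + (l : ℚ) * d * β) ≠ 0) →
      ∃ u : Fin 2 → ℚ, (∀ j, u j ∈ (G : Set ℚ) \ {0}) ∧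
        ∀ l : ℕ, C l 0 * u 0 + C l 1 * u 1 = ((α : ℚ) + (l : ℚ) * d * β) * p := by
    intro α β h
    have hmem : (fun l : ℕ => ((α : ℚ) + (l : ℚ) * d * β) * p) ∈
        ({w : ℕ → ℚ | ∃ x : Fin 2 → ℚ, (∀ j, x j ∈ G) ∧
            w = mulVecQ (fun (l : ℕ) => ![1, (l : ℚ) * d]) x} ∩
          {w : ℕ → ℚ | ∀ l, w l ∈ (G : Set ℚ) \ {0}}) := by
      constructor
      · refine ⟨![(α : ℚ) * p, (β : ℚ) * p], ?_, ?_⟩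
        · intro j
          fin_cases j
          · simpa using hzmul α
          · simpa using hzmul β
        · funext l
          rw [mulVecQ_two]
          simp only [Matrix.cons_val_zero, Matrix.cons_val_one, Matrix.head_cons]
          ring
      · intro l
        refine ⟨?_, ?_⟩
        · have h2 := hzmul (α + (l * d : ℕ) * β)
          have h3 : (((α + (l * d : ℕ) * β : ℤ)) : ℚ) = (α : ℚ) + (l : ℚ) * d * β := by
            push_cast; ring
          rwa [h3] at h2
        · simp only [Set.mem_singleton_iff]
          exact mul_ne_zero (h l) hp0
    obtain ⟨u, hu, huw⟩ := hsub hmem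
    refine ⟨u, hu, fun l => ?_⟩
    have h4 := congrFun huw l
    rw [mulVecQ_two] at h4
    exact h4.symm
  obtain ⟨y, hyG, hy⟩ := key 1 0 (by intro l; push_cast; norm_num)
  obtain ⟨z, hzG, hz⟩ := key 1 1 (by
    intro l; push_cast
    positivity)
  have hy0 : y 0 ≠ 0 := by simpa using (hyG 0).2
  have hy1 : y 1 ≠ 0 := by simpa using (hyG 1).2
  have hy' : ∀ l : ℕ, C l 0 * y 0 + C l 1 * y 1 = p := by
    intro l; simpa using hy l
  have hz' : ∀ l : ℕ, C l 0 * z 0 + C l 1 * z 1 = (1 + (l : ℚ) * d) * p := by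
    intro l; simpa using hz l
  -- the determinant is nonzero
  have hD : y 0 * z 1 - y 1 * z 0 ≠ 0 := by
    intro hD0
    have e0 : p * z 0 = p * y 0 := by
      have a0 := hy' 0
      have b0 := hz' 0
      push_cast at a0 b0
      linear_combination y 0 * b0 - z 0 * a0 - C 0 1 * hD0
    have e1 : p * z 1 = p * y 1 := by
      have a0 := hy' 0
      have b0 := hz' 0
      push_cast at a0 b0
      linear_combination C 0 0 * hD0 + y 1 * b0 - z 1 * a0
    have ez0 : z 0 = y 0 := mul_left_cancel₀ hp0 e0
    have ez1 : z 1 = y 1 := mul_left_cancel₀ hp0 e1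
    have e2 := hz' 1
    rw [ez0, ez1, hy' 1] at e2
    have : (d : ℚ) * p = 0 := by push_cast at e2; linarith
    exact mul_ne_zero hdQ hp0 this
  -- Cramer's rule for the entries of C
  have hC0 : ∀ l : ℕ, C l 0 * (y 0 * z 1 - y 1 * z 0) =
      p * z 1 - (1 + (l : ℚ) * d) * p * y 1 := by
    intro l; linear_combination z 1 * hy' l - y 1 * hz' l
  have hC1 : ∀ l : ℕ, C l 1 * (y 0 * z 1 - y 1 * z 0) =
      (1 + (l : ℚ) * d) * p * y 0 - p * z 0 := by
    intro l; linear_combination y 0 * hz' l - z 0 * hy' l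
  -- solving for the preimage of a general witness
  have solve : ∀ (u : Fin 2 → ℚ) (a b : ℚ),
      (∀ l : ℕ, C l 0 * u 0 + C l 1 * u 1 = (a + (l : ℚ) * d * b) * p) →
      p * u 0 = a * p * y 0 + b * p * (z 0 - y 0) ∧
      p * u 1 = a * p * y 1 + b * p * (z 1 - y 1) := by
    intro u a b hu
    have h0 := hu 0
    have h1 := hu 1
    have hc00 := hC0 0
    have hc01 := hC1 0
    have hc10 := hC0 1
    have hc11 := hC1 1
    push_cast at h0 h1 hc00 hc01 hc10 hc11
    set D : ℚ := y 0 * z 1 - y 1 * z 0 with hDdef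
    have G0 : (p * z 1 - p * y 1) * u 0 + (p * y 0 - p * z 0) * u 1 = a * p * D := by
      linear_combination D * h0 - u 0 * hc00 - u 1 * hc01
    have G1 : (p * z 1 - (1 + (d : ℚ)) * p * y 1) * u 0 +
        ((1 + (d : ℚ)) * p * y 0 - p * z 0) * u 1 = (a + (d : ℚ) * b) * p * D := by
      linear_combination D * h1 - u 0 * hc10 - u 1 * hc11
    have Hd : (p * y 0 * u 1 - p * y 1 * u 0) * d = (b * p * D) * d := by
      linear_combination G1 - G0
    have H : p * y 0 * u 1 - p * y 1 * u 0 = b * p * D := mul_right_cancel₀ hdQ Hd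
    constructor
    · have P0 : (p * u 0) * D = (a * p * y 0 + b * p * (z 0 - y 0)) * D := by
        linear_combination y 0 * G0 - (y 0 - z 0) * H
      exact mul_right_cancel₀ hD P0
    · have P1 : (p * u 1) * D = (a * p * y 1 + b * p * (z 1 - y 1)) * D := by
        linear_combination y 1 * G0 + (z 1 - y 1) * H
      exact mul_right_cancel₀ hD P1
  -- the ratios are natural numbers
  have hnat : ∀ i : Fin 2, y i ≠ 0 →
      (∀ (u : Fin 2 → ℚ) (a b : ℚ),
        (∀ l : ℕ, C l 0 * u 0 + C l 1 * u 1 = (a + (l : ℚ) * d * b) * p) →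
        p * u i = a * p * y i + b * p * (z i - y i)) →
      ∃ m : ℕ, z i - y i = (m : ℚ) * d * y i := by
    intro i hyi hsolve
    by_contra hno
    push_neg at hno
    set q : ℚ := (z i - y i) / y i with hq
    have hqy : z i - y i = q * y i := (div_mul_cancel₀ _ hyi).symm
    have hden0 : ((q.den : ℚ)) ≠ 0 := Nat.cast_ne_zero.mpr q.den_nz
    have hnum : (q.num : ℚ) = q * (q.den : ℚ) :=
      ((eq_div_iff hden0).mp (Rat.num_div_den q).symm).symm
    have hne : ∀ l : ℕ, (((-q.num : ℤ) : ℚ) + (l : ℚ) * d * ((q.den : ℤ) : ℚ)) ≠ 0 := by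
      intro l hl
      push_cast at hl
      apply hno l
      have h2 : ((l : ℚ) * d) * (q.den : ℚ) = q * (q.den : ℚ) := by
        linear_combination hl + hnum
      have h3 : (l : ℚ) * d = q := mul_right_cancel₀ hden0 h2
      rw [hqy, ← h3]
    obtain ⟨u, huG, hu⟩ := key (-q.num) (q.den) hne
    have hu' : ∀ l : ℕ, C l 0 * u 0 + C l 1 * u 1 =
        ((-(q.num : ℚ)) + (l : ℚ) * d * (q.den : ℚ)) * p := by
      intro l
      have := hu l
      push_cast at this
      exact this
    have hsol := hsolve u (-(q.num : ℚ)) (q.den : ℚ) hu'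
    have hui0 : p * u i = 0 := by
      rw [hsol, hqy]
      linear_combination (-(p * y i)) * hnum
    have : u i = 0 := by
      rcases mul_eq_zero.mp hui0 with h | h
      · exact absurd h hp0
      · exact h
    have hne0 : u i ≠ 0 := by simpa using (huG i).2
    exact hne0 this
  obtain ⟨m, hm⟩ := hnat 0 hy0 (fun u a b hu => (solve u a b hu).1)
  obtain ⟨n, hn⟩ := hnat 1 hy1 (fun u a b hu => (solve u a b hu).2)
  have hDval : y 0 * z 1 - y 1 * z 0 = (d : ℚ) * y 0 * y 1 * ((n : ℚ) - (m : ℚ)) := by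
    linear_combination y 0 * hn - y 1 * hm
  have hkD : (d : ℚ) * y 0 * y 1 * ((m : ℚ) - (n : ℚ)) = -(y 0 * z 1 - y 1 * z 0) := by
    rw [hDval]; ring
  refine ⟨y 0, y 1, hyG 0, hyG 1, m, n, ?_, (d : ℚ) * y 0 * y 1 * ((m : ℚ) - (n : ℚ)),
      ?_, rfl, ?_⟩
  · intro hmn
    apply hD
    rw [hDval, hmn]; ring
  · rw [hkD]
    exact neg_ne_zero.mpr hD
  · intro l
    constructor
    · rw [hkD]
      linear_combination -(1 : ℚ) * hC0 l - p * hn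
    · rw [hkD]
      linear_combination -(1 : ℚ) * hC1 l + p * hm
end

section
/- Let G be a nontrivial subgroup of (ℚ,+) and S = G ∩ ℚ⁺. Let u be a (possibly infinite) index set, v ∈ ℕ, and A a u × v rational matrix (finitely many nonzero entries per row) that is weakly image partition regular over S. Then there exists a u × v rational matrix C, with entries in the subgroup of ℚ generated by the entries of A, such that (1) {C y : y ∈ S^v} ⊆ {A x : x ∈ G^v}, and (2) for every finite colouring of S there exists x ∈ G^v with the entries of A x monochromatic and some y ∈ S^v with C y = A x. -/
/-!
Every `x ∈ G^v` factors as `x = σ ⊙ y` with `σ = sign ∘ x ∈ {-1, 0, 1}^v` and `y ∈ S^v`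
(take `y j = |x j|`, or any positive element of `G` where `x j = 0`).
Since there are only finitely many sign patterns, a product colouring shows that one
pattern `σ` carries monochromatic witnesses for every finite colouring of `S`;
then `C := A · diag σ` works, because `C y = A (σ ⊙ y)`.
-/

open scoped BigOperators

/-- `A` is weakly image partition regular over `S` (colourings of `S`,
with witness vectors in `G`). -/
def WIPRQ' {u v : Type} (A : u → v → ℚ) (S G : Set ℚ) : Prop :=
  ∀ (k : ℕ) (φ : ℚ → Fin k), ∃ x : v → ℚ,
    (∀ j, x j ∈ G) ∧ (∀ i, mulVecQ A x i ∈ S) ∧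
    (∀ i i', φ (mulVecQ A x i) = φ (mulVecQ A x i'))

lemma mulVecQ_mul_right {u v : Type} (A : u → v → ℚ) (σ y : v → ℚ) :
    mulVecQ (fun i j => A i j * σ j) y = mulVecQ A (fun j => σ j * y j) := by
  funext i
  simp only [mulVecQ, mul_assoc]

/-- Otherwise the product of the bad colourings of all the fibres would defeat `h`. -/
lemma WIPRQ'.exists_fiber {u v T : Type} [Finite T] {A : u → v → ℚ} {S G : Set ℚ}
    (h : WIPRQ' A S G) (τ : (v → ℚ) → T) :
    ∃ t : T, ∀ (k : ℕ) (φ : ℚ → Fin k), ∃ x : v → ℚ,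
      (∀ j, x j ∈ G) ∧ (∀ i, mulVecQ A x i ∈ S) ∧
      (∀ i i', φ (mulVecQ A x i) = φ (mulVecQ A x i')) ∧ τ x = t := by
  by_contra! hbad
  choose k φ hφ using hbad
  let e := Finite.equivFin (∀ t : T, Fin (k t))
  obtain ⟨x, hxG, hxS, hxmono⟩ := h _ fun q => e fun t => φ t q
  exact hφ (τ x) x hxG hxS (fun i i' => congrFun (e.injective (hxmono i i')) (τ x)) rfl

lemma AddSubgroup.sign_mul_mem {R : Type*} [Ring R] {G : AddSubgroup R} (s : SignType) {q : R}
    (hq : q ∈ G) : (s : R) * q ∈ G := by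
  cases s <;> simp [hq]

lemma AddSubgroup.exists_pos_mem_eq_sign_mul {R : Type*} [Ring R] [LinearOrder R]
    [IsStrictOrderedRing R] {G : AddSubgroup R} {s : R} (hsG : s ∈ G) (hs : 0 < s) {x : R}
    (hx : x ∈ G) : ∃ y ∈ G, 0 < y ∧ x = SignType.sign x * y := by
  rcases eq_or_ne x 0 with rfl | hx0
  · exact ⟨s, hsG, hs, by simp⟩
  · exact ⟨|x|, abs_mem_iff.2 hx, abs_pos.2 hx0, (sign_mul_abs x).symm⟩

lemma AddSubgroup.exists_pos_mem_of_ne_zero {α : Type*} [AddCommGroup α] [LinearOrder α]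
    [IsOrderedAddMonoid α] {G : AddSubgroup α} {g : α} (hgG : g ∈ G) (hg : g ≠ 0) : ∃ s ∈ G, 0 < s :=
  ⟨|g|, abs_mem_iff.2 hgG, abs_pos.2 hg⟩

/-- let `G` be a nontrivial subgroup of `(ℚ,+)`, `S = G ∩ ℚ⁺`,
`v ∈ ℕ`, and `A` a `u × v` rational matrix weakly image partition regular over
`S`. Then there is a `u × v` rational matrix `C`, with entries in the subgroup
of ℚ generated by the entries of `A`, such that
(1) `{C y : y ∈ S^v} ⊆ {A x : x ∈ G^v}`, and (2) for every finite colouring of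
`S` there is `x ∈ G^v` with the entries of `A x` monochromatic in `S` and some
`y ∈ S^v` with `C y = A x`. -/
theorem stmt17 (G : AddSubgroup ℚ) (hG : ∃ g ∈ G, g ≠ (0 : ℚ))
    (S : Set ℚ) (hSdef : S = {q : ℚ | q ∈ G ∧ 0 < q})
    {u : Type} {v : ℕ} (A : u → Fin v → ℚ)
    (hwipr : WIPRQ' A S (G : Set ℚ)) :
    ∃ C : u → Fin v → ℚ,
      (∀ i j, C i j ∈ AddSubgroup.closure {q : ℚ | ∃ i' j', q = A i' j'}) ∧
      ({w : u → ℚ | ∃ y : Fin v → ℚ, (∀ j, y j ∈ S) ∧ w = mulVecQ C y} ⊆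
        {w : u → ℚ | ∃ x : Fin v → ℚ, (∀ j, x j ∈ G) ∧ w = mulVecQ A x}) ∧
      (∀ (k : ℕ) (φ : ℚ → Fin k), ∃ x : Fin v → ℚ,
        (∀ j, x j ∈ G) ∧ (∀ i, mulVecQ A x i ∈ S) ∧
        (∀ i i', φ (mulVecQ A x i) = φ (mulVecQ A x i')) ∧
        ∃ y : Fin v → ℚ, (∀ j, y j ∈ S) ∧ mulVecQ C y = mulVecQ A x) := by
  subst hSdef
  obtain ⟨g, hgG, hg⟩ := hG
  obtain ⟨s, hsG, hs⟩ := AddSubgroup.exists_pos_mem_of_ne_zero hgG hg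
  obtain ⟨σ, hσ⟩ := hwipr.exists_fiber fun x j => SignType.sign (x j)
  refine ⟨fun i j => A i j * σ j, fun i j => ?_, ?_, fun k φ => ?_⟩
  · have hA : A i j ∈ AddSubgroup.closure {q : ℚ | ∃ i' j', q = A i' j'} :=
      AddSubgroup.subset_closure ⟨i, j, rfl⟩
    simpa only [mul_comm] using AddSubgroup.sign_mul_mem (σ j) hA
  · rintro w ⟨y, hy, rfl⟩
    exact ⟨_, fun j => AddSubgroup.sign_mul_mem _ (hy j).1, mulVecQ_mul_right A _ y⟩
  · obtain ⟨x, hxG, hxS, hxmono, rfl⟩ := hσ k φ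
    choose y hyG hypos hxy using fun j => AddSubgroup.exists_pos_mem_eq_sign_mul hsG hs (hxG j)
    refine ⟨x, hxG, hxS, hxmono, y, fun j => ⟨hyG j, hypos j⟩, ?_⟩
    rw [mulVecQ_mul_right]
    exact congrArg (mulVecQ A) (funext hxy).symm
end

section
/- Let G be a nontrivial subgroup of (ℚ,+), S = G ∩ ℚ⁺, let u, v be (possibly countably infinite) index sets, and let A be a u × v rational matrix with finitely many nonzero entries per row. Then A is weakly image partition regular over S if and only if there exists a u × v rational matrix C (finitely many nonzero entries per row) that is image partition regular over S and such that for every y ∈ S^v there exists x ∈ G^v with A x = C y. -/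
open scoped BigOperators

/-- `C` is image partition regular over `S` (colourings of `S`). -/
def IPRQ' {u v : Type} (C : u → v → ℚ) (S : Set ℚ) : Prop :=
  ∀ (k : ℕ) (φ : ℚ → Fin k), ∃ y : v → ℚ,
    (∀ j, y j ∈ S) ∧ (∀ i, mulVecQ C y i ∈ S) ∧
    (∀ i i', φ (mulVecQ C y i) = φ (mulVecQ C y i'))

/-- Every element of `G` is a difference of two positive elements of `G`. -/
lemma decompG (G : AddSubgroup ℚ) (s₀ : ℚ) (hs₀ : s₀ ∈ G) (hp : 0 < s₀) (g : ℚ) (hg : g ∈ G) :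
    ∃ s t : ℚ, s ∈ G ∧ 0 < s ∧ t ∈ G ∧ 0 < t ∧ g = s - t := by
  set n : ℕ := ⌈|g|/s₀⌉₊ + 1 with hn
  have hns : (n : ℚ) * s₀ ∈ G := by
    have := AddSubgroup.nsmul_mem G hs₀ n
    rwa [nsmul_eq_mul] at this
  have hbig : |g| < (n : ℚ) * s₀ := by
    have h1 : (|g|/s₀ : ℚ) ≤ (⌈|g|/s₀⌉₊ : ℚ) := Nat.le_ceil _
    have h3 : (n : ℚ) = (⌈|g|/s₀⌉₊ : ℚ) + 1 := by push_cast [hn]; ring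
    rw [h3]
    have h2 : |g| = (|g|/s₀) * s₀ := by field_simp
    nlinarith [abs_nonneg g]
  refine ⟨g + n * s₀, n * s₀, G.add_mem hg hns, ?_, hns, ?_, by ring⟩
  · have := abs_lt.mp hbig
    linarith [neg_abs_le g]
  · have := abs_nonneg g; linarith

/-- let `G` be a nontrivial subgroup of `(ℚ,+)`, `S = G ∩ ℚ⁺`, and
`A` a row-finite `u × v` rational matrix (`u, v` at most countable). Then `A` is
weakly image partition regular over `S` iff there is a row-finite `u × v`
rational matrix `C`, image partition regular over `S`, such that for every
`y ∈ S^v` there is `x ∈ G^v` with `A x = C y`. -/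
theorem stmt18 (G : AddSubgroup ℚ) (hG : ∃ g ∈ G, g ≠ (0 : ℚ))
    (S : Set ℚ) (hSdef : S = {q : ℚ | q ∈ G ∧ 0 < q})
    {u v : Type} [Countable u] [Countable v]
    (A : u → v → ℚ) (hA : ∀ i, (Function.support (A i)).Finite) :
    WIPRQ' A S (G : Set ℚ) ↔
      ∃ C : u → v → ℚ,
        (∀ i, (Function.support (C i)).Finite) ∧
        IPRQ' C S ∧
        (∀ y : v → ℚ, (∀ j, y j ∈ S) →
          ∃ x : v → ℚ, (∀ j, x j ∈ G) ∧ mulVecQ A x = mulVecQ C y) := by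
  classical
  subst hSdef
  obtain ⟨g₀, hg₀G, hg₀⟩ := hG
  obtain ⟨s₀, hs₀G, hs₀p⟩ : ∃ s₀ : ℚ, s₀ ∈ G ∧ 0 < s₀ := by
    rcases lt_trichotomy g₀ 0 with h | h | h
    · exact ⟨-g₀, G.neg_mem hg₀G, by linarith⟩
    · exact absurd h hg₀
    · exact ⟨g₀, hg₀G, h⟩
  constructor
  · intro hW
    cases finite_or_infinite v with
    | inl hfin =>
      -- FINITE CASE : sign-pattern compactness
      haveI := Fintype.ofFinite v
      set sg : (v → Fin 3) → v → ℚ := fun τ j => ((τ j : ℕ) : ℚ) - 1 with hsg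
      set CC : (v → Fin 3) → u → v → ℚ := fun τ i j => A i j * sg τ j with hCC
      have hsgval : ∀ τ (j : v), sg τ j = -1 ∨ sg τ j = 0 ∨ sg τ j = 1 := by
        intro τ j
        simp only [hsg]
        have hlt := (τ j).is_lt
        have h : ((τ j : ℕ)) = 0 ∨ ((τ j : ℕ)) = 1 ∨ ((τ j : ℕ)) = 2 := by omega
        rcases h with h | h | h <;> rw [h] <;> norm_num
      have hrow : ∀ τ i, (Function.support (CC τ i)).Finite := by
        intro τ i
        apply (hA i).subset
        intro j hj
        simp only [Function.mem_support] at hj ⊢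
        intro h0
        apply hj
        simp [hCC, h0]
      have hmul : ∀ τ (y : v → ℚ) i,
          mulVecQ (CC τ) y i = mulVecQ A (fun j => sg τ j * y j) i := by
        intro τ y i
        unfold mulVecQ
        exact finsum_congr fun j => by simp only [hCC]; ring
      have hGmem : ∀ τ (y : v → ℚ), (∀ j, y j ∈ {q : ℚ | q ∈ G ∧ 0 < q}) →
          ∀ j, sg τ j * y j ∈ G := by
        intro τ y hy j
        have hyG : y j ∈ G := (hy j).1
        rcases hsgval τ j with h | h | h <;> rw [h]
        · simpa using G.neg_mem hyG
        · simpa using G.zero_mem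
        · simpa using hyG
      have hexτ : ∃ τ, IPRQ' (CC τ) {q : ℚ | q ∈ G ∧ 0 < q} := by
        by_contra hno
        push_neg at hno
        have hex : ∀ τ, ∃ (k : ℕ) (φ : ℚ → Fin k), ∀ y : v → ℚ,
            ¬((∀ j, y j ∈ {q : ℚ | q ∈ G ∧ 0 < q}) ∧
              (∀ i, mulVecQ (CC τ) y i ∈ {q : ℚ | q ∈ G ∧ 0 < q}) ∧
              (∀ i i', φ (mulVecQ (CC τ) y i) = φ (mulVecQ (CC τ) y i'))) := by
          intro τ
          have h := hno τ
          unfold IPRQ' at h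
          push_neg at h
          obtain ⟨k, φ, hk⟩ := h
          refine ⟨k, φ, fun y hy => ?_⟩
          obtain ⟨i, i', hne⟩ := hk y hy.1 hy.2.1
          exact hne (hy.2.2 i i')
        choose kk φφ hφφ using hex
        set K := ∀ τ : v → Fin 3, Fin (kk τ) with hK
        haveI : Fintype K := by infer_instance
        set en : K ≃ Fin (Fintype.card K) := Fintype.equivFin K with hen
        obtain ⟨x, hxG, hxS, hxmono⟩ :=
          hW (Fintype.card K) (fun t => en (fun τ => φφ τ t))
        set τs : v → Fin 3 := fun j => if x j < 0 then 0 else if x j = 0 then 1 else 2 with hτs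
        set y : v → ℚ := fun j => if x j = 0 then s₀ else |x j| with hy
        have hyS : ∀ j, y j ∈ {q : ℚ | q ∈ G ∧ 0 < q} := by
          intro j
          by_cases h0 : x j = 0
          · simp only [hy, h0, if_pos, Set.mem_setOf_eq]
            simp [hs₀G, hs₀p]
          · simp only [hy, if_neg h0, Set.mem_setOf_eq]
            constructor
            · rcases abs_choice (x j) with h | h <;> rw [h]
              · exact hxG j
              · exact G.neg_mem (hxG j)
            · exact abs_pos.mpr h0
        have hkey : ∀ j, sg τs j * y j = x j := by
          intro j
          by_cases h0 : x j = 0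
          · simp [hsg, hτs, hy, h0]
          · rcases lt_or_gt_of_ne h0 with h | h
            · have : x j < 0 := h
              simp [hsg, hτs, hy, h0, this, abs_of_neg this]
            · have h1 : ¬ x j < 0 := by linarith
              simp only [hsg, hτs, hy, h0, h1, if_false, if_neg h0, abs_of_pos h]
              norm_num
        have hM : ∀ i, mulVecQ (CC τs) y i = mulVecQ A x i := by
          intro i
          rw [hmul]
          unfold mulVecQ
          exact finsum_congr fun j => by simp only [hkey j]
        apply hφφ τs y
        refine ⟨hyS, fun i => by rw [hM]; exact hxS i, fun i i' => ?_⟩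
        have h2 := hxmono i i'
        have h3 : (fun τ => φφ τ (mulVecQ A x i)) = (fun τ => φφ τ (mulVecQ A x i')) :=
          en.injective h2
        rw [hM i, hM i']
        exact congrFun h3 τs
      obtain ⟨τ, hτ⟩ := hexτ
      refine ⟨CC τ, hrow τ, hτ, fun y hy => ⟨fun j => sg τ j * y j, hGmem τ y hy, ?_⟩⟩
      exact funext fun i => (hmul τ y i).symm
    | inr hinf =>
      -- INFINITE CASE : splitting variables into differences
      have e : v ≃ ℕ := by
        haveI : Encodable v := Encodable.ofCountable v
        haveI : Denumerable v := Denumerable.ofEncodableOfInfinite v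
        exact Denumerable.eqv v
      set p : v → v := fun j => e.symm (2 * e j) with hp
      set q : v → v := fun j => e.symm (2 * e j + 1) with hq
      set C : u → v → ℚ := fun i k =>
        if e k % 2 = 0 then A i (e.symm (e k / 2)) else - A i (e.symm (e k / 2)) with hC
      have hCp : ∀ i j, C i (p j) = A i j := by
        intro i j
        have h1 : (2 * e j) % 2 = 0 := by omega
        have h2 : 2 * e j / 2 = e j := by omega
        simp [hC, hp, Equiv.apply_symm_apply, h1, h2]
      have hCq : ∀ i j, C i (q j) = - A i j := by
        intro i j
        have h1 : ¬ ((2 * e j + 1) % 2 = 0) := by omega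
        have h2 : (2 * e j + 1) / 2 = e j := by omega
        simp [hC, hq, Equiv.apply_symm_apply, h1, h2]
      have hpinj : Function.Injective p := by
        intro a b h
        have h2 := congrArg e h
        simp only [hp, Equiv.apply_symm_apply] at h2
        exact e.injective (by omega)
      have hqinj : Function.Injective q := by
        intro a b h
        have h2 := congrArg e h
        simp only [hq, Equiv.apply_symm_apply] at h2
        exact e.injective (by omega)
      have hkmem : ∀ (i : u) (k : v), C i k ≠ 0 →
          (∃ j, A i j ≠ 0 ∧ p j = k) ∨ (∃ j, A i j ≠ 0 ∧ q j = k) := by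
        intro i k hk
        have hAne : A i (e.symm (e k / 2)) ≠ 0 := by
          intro h; apply hk; simp [hC, h]
        by_cases hpar : e k % 2 = 0
        · left
          refine ⟨e.symm (e k / 2), hAne, ?_⟩
          simp only [hp, Equiv.apply_symm_apply]
          have : 2 * (e k / 2) = e k := by omega
          rw [this, Equiv.symm_apply_apply]
        · right
          refine ⟨e.symm (e k / 2), hAne, ?_⟩
          simp only [hq, Equiv.apply_symm_apply]
          have : 2 * (e k / 2) + 1 = e k := by omega
          rw [this, Equiv.symm_apply_apply]
      have key : ∀ (i : u) (z : v → ℚ),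
          (∑ᶠ k, C i k * z k) = ∑ᶠ j, A i j * (z (p j) - z (q j)) := by
        intro i z
        set T := (hA i).toFinset with hT
        have hmemT : ∀ j, j ∈ T ↔ A i j ≠ 0 := by
          intro j; simp [hT, Set.Finite.mem_toFinset, Function.mem_support]
        have hPQ : Disjoint (T.image p) (T.image q) := by
          rw [Finset.disjoint_left]
          intro k hk hk'
          obtain ⟨a, _, ha⟩ := Finset.mem_image.mp hk
          obtain ⟨b, _, hb⟩ := Finset.mem_image.mp hk'
          have : p a = q b := by rw [ha, hb]
          have h2 := congrArg e this
          simp only [hp, hq, Equiv.apply_symm_apply] at h2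
          omega
        have hsup1 : Function.support (fun k => C i k * z k) ⊆ ↑(T.image p ∪ T.image q) := by
          intro k hk
          simp only [Function.mem_support] at hk
          have hCk : C i k ≠ 0 := fun h => hk (by rw [h]; ring)
          rcases hkmem i k hCk with ⟨j, hj, hjk⟩ | ⟨j, hj, hjk⟩
          · simp only [Finset.coe_union, Set.mem_union, Finset.coe_image, Set.mem_image]
            exact Or.inl ⟨j, (hmemT j).mpr hj, hjk⟩
          · simp only [Finset.coe_union, Set.mem_union, Finset.coe_image, Set.mem_image]
            exact Or.inr ⟨j, (hmemT j).mpr hj, hjk⟩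
        have hsup2 : Function.support (fun j => A i j * (z (p j) - z (q j))) ⊆ ↑T := by
          intro j hj
          simp only [Function.mem_support] at hj
          have : A i j ≠ 0 := fun h => hj (by rw [h]; ring)
          simpa [hmemT] using this
        rw [finsum_eq_sum_of_support_subset _ hsup1,
            finsum_eq_sum_of_support_subset _ hsup2,
            Finset.sum_union hPQ,
            Finset.sum_image (fun a _ b _ h => hpinj h),
            Finset.sum_image (fun a _ b _ h => hqinj h)]
        rw [← Finset.sum_add_distrib]
        apply Finset.sum_congr rfl
        intro j _
        rw [hCp, hCq]
        ring
      have hrowC : ∀ i, (Function.support (C i)).Finite := by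
        intro i
        apply Set.Finite.subset (((hA i).image p).union ((hA i).image q))
        intro k hk
        simp only [Function.mem_support] at hk
        rcases hkmem i k hk with ⟨j, hj, hjk⟩ | ⟨j, hj, hjk⟩
        · exact Or.inl ⟨j, hj, hjk⟩
        · exact Or.inr ⟨j, hj, hjk⟩
      refine ⟨C, hrowC, ?_, ?_⟩
      · -- IPR
        intro k φ
        obtain ⟨x, hxG, hxS, hxmono⟩ := hW k φ
        choose s t hsG hsp htG htp hst using fun j => decompG G s₀ hs₀G hs₀p (x j) (hxG j)
        set y : v → ℚ := fun k' =>
          if e k' % 2 = 0 then s (e.symm (e k' / 2)) else t (e.symm (e k' / 2)) with hy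
        have hyS : ∀ k', y k' ∈ {q : ℚ | q ∈ G ∧ 0 < q} := by
          intro k'
          by_cases hpar : e k' % 2 = 0
          · simp only [hy, if_pos hpar, Set.mem_setOf_eq]
            exact ⟨hsG _, hsp _⟩
          · simp only [hy, if_neg hpar, Set.mem_setOf_eq]
            exact ⟨htG _, htp _⟩
        have hyp : ∀ j, y (p j) = s j := by
          intro j
          have h1 : (2 * e j) % 2 = 0 := by omega
          have h2 : 2 * e j / 2 = e j := by omega
          simp [hy, hp, Equiv.apply_symm_apply, h1, h2]
        have hyq : ∀ j, y (q j) = t j := by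
          intro j
          have h1 : ¬ ((2 * e j + 1) % 2 = 0) := by omega
          have h2 : (2 * e j + 1) / 2 = e j := by omega
          simp [hy, hq, Equiv.apply_symm_apply, h1, h2]
        have hM : ∀ i, mulVecQ C y i = mulVecQ A x i := by
          intro i
          unfold mulVecQ
          rw [key i y]
          apply finsum_congr
          intro j
          rw [hyp, hyq, ← hst]
        exact ⟨y, hyS, fun i => by rw [hM]; exact hxS i,
          fun i i' => by rw [hM i, hM i']; exact hxmono i i'⟩
      · -- transfer
        intro y hyS
        refine ⟨fun j => y (p j) - y (q j), fun j => G.sub_mem (hyS (p j)).1 (hyS (q j)).1, ?_⟩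
        funext i
        unfold mulVecQ
        rw [key i y]
  · rintro ⟨C, _, hIPR, hsolv⟩
    intro k φ
    obtain ⟨y, hyS, hCyS, hmono⟩ := hIPR k φ
    obtain ⟨x, hxG, hAx⟩ := hsolv y hyS
    exact ⟨x, hxG, fun i => by rw [hAx]; exact hCyS i,
      fun i i' => by rw [hAx]; exact hmono i i'⟩
end
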